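/- arXiv:1508.01554 — 6 statements merged into one kernel-verified Lean document; each statement's English description precedes it below -/
import Mathlib

section
/- If d ≥ n+1, then the free ℚ-vector space 𝒫 is spanned by the union of ker(φ) and the set of basis elements (S,T) that are disconnected or have a multiple edge; that is, the ℚ-linear span of {(S,T) : (S,T) is disconnected or has a multiple edge} ∪ ker(φ) equals all of 𝒫. -/
/-!
Work modulo the span of `ker φ` and of the disconnected pairs and pairs with a multiple edge.
If two labels lie in the same row of `S`, exchanging them in `S` changes the sign of `φ`, while
exchanging them in `T` does not change the class: this is a Plücker relation whose other terms
have a multiple edge. So relabelling `(S, T)` by such a transposition, or symmetrically by one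
within a row of `T`, multiplies its class by `-1`. When `G(S, T)` is connected these
transpositions generate the symmetric group on the labels, so relabelling by any `π`
multiplies the class by `sign π`. On the other hand, the antisymmetrization of `φ(S, T)` over
all `dn` labels vanishes because `dn > n²`, hence `(dn)! • [(S, T)] = 0`.
-/

noncomputable section

open Finset

/-- A filling: a `d × n` tableau filled bijectively with the labels `1, …, dn`
(first index = row). -/
abbrev Filling (n d : ℕ) := (Fin d × Fin n) ≃ Fin (d * n)

/-- The free `ℚ`-vector space `𝒫` on the set of pairs of fillings. -/
abbrev PSpace (n d : ℕ) := (Filling n d × Filling n d) →₀ ℚ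

/-- The multilinear function associated to a pair of fillings `(S, T)`:
`φ(S,T)(v,w) = ∏ᵢ det[v_{S(i,1)} | ⋯ | v_{S(i,n)}] · ∏ⱼ det[w_{T(j,1)} | ⋯ | w_{T(j,n)}]`. -/
def phiFun (n d : ℕ) (ST : Filling n d × Filling n d)
    (vw : Fin (d * n) → (Fin n → ℚ) × (Fin n → ℚ)) : ℚ :=
  (∏ i : Fin d, (Matrix.of fun r c : Fin n => (vw (ST.1 (i, c))).1 r).det) *
  (∏ j : Fin d, (Matrix.of fun r c : Fin n => (vw (ST.2 (j, c))).2 r).det)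

/-- The linear extension `φ : 𝒫 → (((ℚⁿ × ℚⁿ)^{dn}) → ℚ)`. -/
def phi (n d : ℕ) :
    PSpace n d →ₗ[ℚ] ((Fin (d * n) → (Fin n → ℚ) × (Fin n → ℚ)) → ℚ) :=
  Finsupp.linearCombination ℚ (phiFun n d)

/-- The bipartite graph of a pair of fillings `(S, T)`: left vertex `i` is adjacent to right
vertex `j` iff some label `k` occurs both in row `i` of `S` and in row `j` of `T`. -/
def graphOf (n d : ℕ) (ST : Filling n d × Filling n d) : SimpleGraph (Fin d ⊕ Fin d) :=
  SimpleGraph.fromRel (fun a b => ∃ i j : Fin d, a = Sum.inl i ∧ b = Sum.inr j ∧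
    ∃ k : Fin (d * n), (ST.1.symm k).1 = i ∧ (ST.2.symm k).1 = j)

/-- `(S, T)` is disconnected if its bipartite graph is not connected. -/
def IsDisconnected (n d : ℕ) (ST : Filling n d × Filling n d) : Prop :=
  ¬ (graphOf n d ST).Connected

/-- `(S, T)` has a multiple edge if two distinct labels occur in the same row of `S` and
the same row of `T`. -/
def HasMultipleEdge (n d : ℕ) (ST : Filling n d × Filling n d) : Prop :=
  ∃ k k' : Fin (d * n), k ≠ k' ∧ (ST.1.symm k).1 = (ST.1.symm k').1 ∧
    (ST.2.symm k).1 = (ST.2.symm k').1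

open Equiv

theorem Equiv.trans_swap_eq_swap_trans {α β : Type*} [DecidableEq α] [DecidableEq β]
    (U : α ≃ β) (x y : β) : U.trans (swap x y) = (swap (U.symm x) (U.symm y)).trans U := by
  rw [← trans_swap_trans_symm, Equiv.trans_assoc, Equiv.trans_assoc, Equiv.symm_trans_self,
    Equiv.trans_refl]

/-- Cramer's rule, for the rows of `B`. -/
theorem Matrix.sum_det_updateRow_smul {ι R : Type*} [Fintype ι] [DecidableEq ι] [CommRing R]
    (B : Matrix ι ι R) (x : ι → R) :
    ∑ c, (B.updateRow c x).det • B c = B.det • x := by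
  rw [← B.det_transpose, ← B.transpose.mulVec_cramer x]
  ext r
  simp [Matrix.mulVec, dotProduct, Matrix.cramer_transpose_apply, mul_comm]

theorem Matrix.det_updateRow_sum_smul {ι κ R : Type*} [Fintype ι] [DecidableEq ι] [CommRing R]
    [Fintype κ] (A : Matrix ι ι R) (k : ι) (c : κ → R) (y : κ → ι → R) :
    (A.updateRow k (∑ i, c i • y i)).det = ∑ i, c i * (A.updateRow k (y i)).det := by
  let L := (Matrix.detRowAlternating (R := R) (n := ι)).toMultilinearMap.toLinearMap A k
  have hL : ∀ x, L x = (A.updateRow k x).det := fun x => rfl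
  simp only [← hL, map_sum, map_smul, smul_eq_mul]

/-- The Plücker relation. -/
theorem Matrix.det_mul_det_eq_sum_det_updateRow_mul_det_updateRow {ι R : Type*} [Fintype ι]
    [DecidableEq ι] [CommRing R] (A B : Matrix ι ι R) (k : ι) :
    A.det * B.det = ∑ c, (A.updateRow k (B c)).det * (B.updateRow c (A k)).det := by
  calc A.det * B.det = (A.updateRow k (B.det • A k)).det := by
        rw [Matrix.det_updateRow_smul, Matrix.updateRow_eq_self, mul_comm]
    _ = ∑ c, (B.updateRow c (A k)).det * (A.updateRow k (B c)).det := by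
      rw [← Matrix.sum_det_updateRow_smul]
      exact Matrix.det_updateRow_sum_smul A k _ _
    _ = _ := by simp_rw [mul_comm]

theorem Equiv.Perm.sum_sign_mul_prod_eq_zero_of_not_injective {ι κ R : Type*} [Fintype ι]
    [DecidableEq ι] [CommRing R] (A : ι → κ → R) {x : ι → κ} (hx : ¬ Function.Injective x) :
    ∑ π : Perm ι, (Perm.sign π : R) * ∏ i, A (π i) (x i) = 0 := by
  obtain ⟨i, j, hij, hne⟩ := Function.not_injective_iff.1 hx
  have := (Matrix.of fun m i => A m (x i)).det_zero_of_column_eq hne (by simp [hij])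
  rwa [Matrix.det_apply'] at this

section detProd

variable {n d : ℕ} {R : Type*}

theorem curry_comp_swap_of_ne (f : Fin d × Fin n → Fin n → R) {p q : Fin d × Fin n} {i : Fin d}
    (hp : i ≠ p.1) (hq : i ≠ q.1) :
    Function.curry (f ∘ swap p q) i = Function.curry f i := by
  funext c
  simp only [Function.curry_apply, Function.comp_apply]
  rw [swap_apply_of_ne_of_ne (fun h => hp (congrArg Prod.fst h))
    (fun h => hq (congrArg Prod.fst h))]

theorem curry_comp_swap_eq_update (f : Fin d × Fin n → Fin n → R) {i j : Fin d} (hij : i ≠ j)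
    (k c : Fin n) :
    Function.curry (f ∘ swap (i, k) (j, c)) i =
      Function.update (Function.curry f i) k (f (j, c)) := by
  funext c'
  rcases eq_or_ne c' k with rfl | hc'
  · simp
  · rw [Function.update_of_ne hc']
    simp [swap_apply_of_ne_of_ne, hc', hij]

variable [CommRing R]

def detProd (f : Fin d × Fin n → Fin n → R) : R :=
  ∏ i, (Matrix.of (Function.curry f i)).det

theorem phiFun_eq_detProd_mul_detProd (ST : Filling n d × Filling n d)
    (vw : Fin (d * n) → (Fin n → ℚ) × (Fin n → ℚ)) :
    phiFun n d ST vw =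
      detProd (fun x => (vw (ST.1 x)).1) * detProd (fun x => (vw (ST.2 x)).2) := by
  simp only [phiFun, detProd, ← Matrix.det_transpose (Matrix.of (Function.curry _ _))]
  rfl

theorem detProd_comp_equiv_eq_sum {ι : Type*} [Fintype ι] (U : Fin d × Fin n ≃ ι)
    (u : ι → Fin n → R) :
    detProd (u ∘ U) = ∑ ρ : Fin d → Perm (Fin n),
      (∏ i, (Perm.sign (ρ i) : R)) * ∏ k, u k (ρ (U.symm k).1 (U.symm k).2) := by
  simp only [detProd, ← Matrix.det_transpose (Matrix.of (Function.curry _ _)), Matrix.det_apply',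
    Finset.prod_univ_sum, Fintype.piFinset_univ, Finset.prod_mul_distrib]
  refine Finset.sum_congr rfl fun ρ _ => congrArg _ ?_
  rw [← Fintype.prod_prod_type', ← U.prod_comp]
  simp

theorem detProd_comp_swap_of_fst_eq (f : Fin d × Fin n → Fin n → R) {p q : Fin d × Fin n}
    (hpq : p ≠ q) (hrow : p.1 = q.1) : detProd (f ∘ swap p q) = -detProd f := by
  obtain ⟨i, k⟩ := p
  obtain ⟨_, l⟩ := q
  subst hrow
  have hkl : k ≠ l := fun h => hpq (by rw [h])
  have hi : Function.curry (f ∘ swap (i, k) (i, l)) i = Function.curry f i ∘ swap k l := by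
    funext c
    simp [(Prod.mk_right_injective i).swap_apply]
  have hrest : ∀ i' ∈ ({i}ᶜ : Finset (Fin d)),
      (Matrix.of (Function.curry (f ∘ swap (i, k) (i, l)) i')).det =
        (Matrix.of (Function.curry f i')).det := by
    intro i' hi'
    have hi' : i' ≠ i := by simpa using hi'
    rw [curry_comp_swap_of_ne f hi' hi']
  have hdet := Matrix.det_permute (swap k l) (Matrix.of (Function.curry f i))
  rw [Perm.sign_swap hkl] at hdet
  unfold detProd
  rw [Fintype.prod_eq_mul_prod_compl i, Fintype.prod_eq_mul_prod_compl i,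
    Finset.prod_congr rfl hrest, hi, show Matrix.of (Function.curry f i ∘ swap k l) =
      (Matrix.of (Function.curry f i)).submatrix (swap k l) id from rfl, hdet]
  simp

theorem detProd_eq_sum_detProd_comp_swap (f : Fin d × Fin n → Fin n → R) {p : Fin d × Fin n}
    {j : Fin d} (hpj : p.1 ≠ j) : detProd f = ∑ c, detProd (f ∘ swap p (j, c)) := by
  obtain ⟨i, k⟩ := p
  change i ≠ j at hpj
  have hj : j ∈ ({i}ᶜ : Finset (Fin d)) := by simpa using hpj.symm
  have split : ∀ g : Fin d → R, ∏ x, g x = g i * (g j * ∏ x ∈ ({i}ᶜ : Finset _).erase j, g x) :=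
    fun g => by rw [Fintype.prod_eq_mul_prod_compl i, Finset.mul_prod_erase _ _ hj]
  have hrest : ∀ c, ∀ x ∈ ({i}ᶜ : Finset (Fin d)).erase j,
      (Matrix.of (Function.curry (f ∘ swap (i, k) (j, c)) x)).det =
        (Matrix.of (Function.curry f x)).det := by
    intro c x hx
    have hx : x ≠ j ∧ x ≠ i := by simpa using hx
    rw [curry_comp_swap_of_ne f hx.2 hx.1]
  unfold detProd
  simp_rw [split, Finset.prod_congr rfl (hrest _), ← mul_assoc, ← Finset.sum_mul]
  congr 1
  rw [Matrix.det_mul_det_eq_sum_det_updateRow_mul_det_updateRow _ _ k]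
  refine Finset.sum_congr rfl fun c _ => ?_
  rw [curry_comp_swap_eq_update f hpj, swap_comm, curry_comp_swap_eq_update f hpj.symm]
  rfl

end detProd

section Relabel

variable {n d : ℕ}

def relabel (π : Perm (Fin (d * n))) (ST : Filling n d × Filling n d) :
    Filling n d × Filling n d :=
  (ST.1.trans π, ST.2.trans π)

/-- After expanding the determinants, each monomial assigns to every label a pair of coordinates
in `Fin n × Fin n`; once `n * n < d * n` two labels get the same pair, and the alternating sum
over the labels of that monomial is a determinant with two equal columns. -/
theorem sum_sign_mul_phiFun_relabel_eq_zero (ST : Filling n d × Filling n d)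
    (hlt : n * n < d * n) (vw : Fin (d * n) → (Fin n → ℚ) × (Fin n → ℚ)) :
    ∑ π : Perm (Fin (d * n)), (Perm.sign π : ℚ) * phiFun n d (relabel π ST) vw = 0 := by
  have hexpand : ∀ π : Perm (Fin (d * n)), phiFun n d (relabel π ST) vw =
      detProd ((fun k => (vw (π k)).1) ∘ ST.1) * detProd ((fun k => (vw (π k)).2) ∘ ST.2) :=
    fun π => phiFun_eq_detProd_mul_detProd _ _
  simp_rw [hexpand, detProd_comp_equiv_eq_sum, Finset.sum_mul_sum, Finset.mul_sum]
  rw [Finset.sum_comm]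
  refine Finset.sum_eq_zero fun ρ _ => ?_
  rw [Finset.sum_comm]
  refine Finset.sum_eq_zero fun σ _ => ?_
  set x : Fin (d * n) → Fin n × Fin n := fun k =>
    (ρ (ST.1.symm k).1 (ST.1.symm k).2, σ (ST.2.symm k).1 (ST.2.symm k).2)
  have hx : ¬ Function.Injective x := fun hinj =>
    hlt.not_ge (by simpa using Fintype.card_le_of_injective x hinj)
  have := Perm.sum_sign_mul_prod_eq_zero_of_not_injective
    (fun m (rs : Fin n × Fin n) => (vw m).1 rs.1 * (vw m).2 rs.2) hx
  rw [← mul_zero ((∏ i, (Perm.sign (ρ i) : ℚ)) * ∏ i, (Perm.sign (σ i) : ℚ)), ← this,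
    Finset.mul_sum]
  refine Finset.sum_congr rfl fun π _ => ?_
  simp only [x, Finset.prod_mul_distrib]
  ring

theorem graphOf_relabel (π : Perm (Fin (d * n))) (ST : Filling n d × Filling n d) :
    graphOf n d (relabel π ST) = graphOf n d ST := by
  unfold graphOf relabel
  congr 1
  ext a b
  simp only [Equiv.symm_trans_apply]
  constructor
  · rintro ⟨i, j, rfl, rfl, k, hk⟩
    exact ⟨i, j, rfl, rfl, π.symm k, hk⟩
  · rintro ⟨i, j, rfl, rfl, k, hk⟩
    exact ⟨i, j, rfl, rfl, π k, by simpa using hk⟩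

theorem HasMultipleEdge.relabel {ST : Filling n d × Filling n d} (h : HasMultipleEdge n d ST)
    (π : Perm (Fin (d * n))) : HasMultipleEdge n d (relabel π ST) := by
  obtain ⟨k, k', hne, h1, h2⟩ := h
  exact ⟨π k, π k', π.injective.ne hne, by simpa [_root_.relabel] using h1,
    by simpa [_root_.relabel] using h2⟩

def graphOfSwapIso (ST : Filling n d × Filling n d) : graphOf n d ST.swap ≃g graphOf n d ST where
  toEquiv := Equiv.sumComm _ _
  map_rel_iff' {a b} := by
    cases a <;> cases b <;> simp [graphOf, and_comm]

theorem HasMultipleEdge.swap {ST : Filling n d × Filling n d} (h : HasMultipleEdge n d ST) :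
    HasMultipleEdge n d ST.swap := by
  obtain ⟨k, k', hne, h1, h2⟩ := h
  exact ⟨k, k', hne, h2, h1⟩

end Relabel

section Quotient

variable {n d : ℕ}

variable (n d) in
def negligible : Submodule ℚ (PSpace n d) :=
  Submodule.span ℚ
    ({x : PSpace n d | ∃ ST : Filling n d × Filling n d,
        (IsDisconnected n d ST ∨ HasMultipleEdge n d ST) ∧ x = Finsupp.single ST 1}
      ∪ (LinearMap.ker (phi n d) : Set (PSpace n d)))

def cls (ST : Filling n d × Filling n d) : PSpace n d ⧸ negligible n d :=
  (negligible n d).mkQ (Finsupp.single ST 1)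

theorem cls_eq_zero {ST : Filling n d × Filling n d}
    (h : IsDisconnected n d ST ∨ HasMultipleEdge n d ST) : cls ST = 0 :=
  (Submodule.Quotient.mk_eq_zero _).2 (Submodule.subset_span (Or.inl ⟨ST, h, rfl⟩))

theorem phi_single (ST : Filling n d × Filling n d) (c : ℚ) :
    phi n d (Finsupp.single ST c) = c • phiFun n d ST := by
  simp [phi]

theorem mkQ_negligible_eq_of_phi_eq {x y : PSpace n d} (h : phi n d x = phi n d y) :
    (negligible n d).mkQ x = (negligible n d).mkQ y :=
  (Submodule.Quotient.eq _).2 (Submodule.subset_span (Or.inr (by simp [h])))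

theorem cls_eq_smul_of_phiFun_eq {A B : Filling n d × Filling n d} {c : ℚ}
    (h : phiFun n d A = c • phiFun n d B) : cls A = c • cls B := by
  have := mkQ_negligible_eq_of_phi_eq (x := Finsupp.single A 1)
    (y := c • Finsupp.single B 1) (by simp [phi_single, h])
  simpa only [cls, map_smul] using this

theorem cls_eq_sum_of_phiFun_eq {ι : Type*} [Fintype ι] {A : Filling n d × Filling n d}
    {B : ι → Filling n d × Filling n d} (h : phiFun n d A = ∑ i, phiFun n d (B i)) :
    cls A = ∑ i, cls (B i) := by
  have := mkQ_negligible_eq_of_phi_eq (x := Finsupp.single A 1)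
    (y := ∑ i, Finsupp.single (B i) 1) (by simp [phi_single, h])
  simpa only [cls, map_sum] using this

theorem sum_smul_cls_eq_zero_of_phiFun {ι : Type*} [Fintype ι] {c : ι → ℚ}
    {A : ι → Filling n d × Filling n d} (h : ∑ i, c i • phiFun n d (A i) = 0) :
    ∑ i, c i • cls (A i) = 0 := by
  have := mkQ_negligible_eq_of_phi_eq (x := ∑ i, c i • Finsupp.single (A i) 1)
    (y := 0) (by simp [phi_single, h])
  simpa only [cls, map_sum, map_smul, map_zero] using this

theorem cls_map_eq_smul (f : Filling n d × Filling n d → Filling n d × Filling n d)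
    (g : (Fin (d * n) → (Fin n → ℚ) × (Fin n → ℚ)) → Fin (d * n) → (Fin n → ℚ) × (Fin n → ℚ))
    (hφ : ∀ ST, phiFun n d (f ST) = phiFun n d ST ∘ g)
    (hf : ∀ ST, IsDisconnected n d ST ∨ HasMultipleEdge n d ST →
      IsDisconnected n d (f ST) ∨ HasMultipleEdge n d (f ST))
    {A B : Filling n d × Filling n d} {c : ℚ} (h : cls A = c • cls B) :
    cls (f A) = c • cls (f B) := by
  have hphi : (phi n d).comp (Finsupp.lmapDomain ℚ ℚ f) =
      (LinearMap.funLeft ℚ ℚ g).comp (phi n d) :=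
    Finsupp.lhom_ext fun ST c => by
      ext vw
      simp [phi_single, hφ, LinearMap.funLeft_apply]
  have hle : negligible n d ≤ (negligible n d).comap (Finsupp.lmapDomain ℚ ℚ f) := by
    refine Submodule.span_le.2 ?_
    rintro x (⟨ST, hST, rfl⟩ | hx)
    · exact Submodule.subset_span (Or.inl ⟨f ST, hf ST hST, by simp⟩)
    · refine Submodule.subset_span (Or.inr ?_)
      have := LinearMap.congr_fun hphi x
      simp only [LinearMap.comp_apply] at this
      rw [SetLike.mem_coe, LinearMap.mem_ker, this, hx, map_zero]
  have := congrArg ((negligible n d).mapQ _ (Finsupp.lmapDomain ℚ ℚ f) hle) h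
  simpa [cls] using this

end Quotient

section Exchange

variable {n d : ℕ}

theorem cls_relabel_eq_smul (π : Perm (Fin (d * n))) {A B : Filling n d × Filling n d} {c : ℚ}
    (h : cls A = c • cls B) : cls (relabel π A) = c • cls (relabel π B) :=
  cls_map_eq_smul (relabel π) (fun vw => vw ∘ π) (fun _ => rfl)
    (fun ST hST => hST.imp (by rw [IsDisconnected, IsDisconnected, graphOf_relabel]; exact id)
      (·.relabel π)) h

theorem cls_swap_eq_smul {A B : Filling n d × Filling n d} {c : ℚ}
    (h : cls A = c • cls B) : cls A.swap = c • cls B.swap :=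
  cls_map_eq_smul Prod.swap (fun vw => Prod.swap ∘ vw)
    (fun ST => funext fun vw => by simp [phiFun_eq_detProd_mul_detProd, mul_comm])
    (fun ST hST => hST.imp (mt (graphOfSwapIso ST).connected_iff.1) HasMultipleEdge.swap) h

theorem cls_fst_trans_swap (S T : Filling n d) {x y : Fin (d * n)} (hxy : x ≠ y)
    (hrow : (S.symm x).1 = (S.symm y).1) : cls (S.trans (swap x y), T) = -cls (S, T) := by
  rw [← neg_one_smul ℚ (cls (S, T))]
  refine cls_eq_smul_of_phiFun_eq (funext fun vw => ?_)
  have := detProd_comp_swap_of_fst_eq (fun p => (vw (S p)).1) (S.symm.injective.ne hxy) hrow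
  simp only [phiFun_eq_detProd_mul_detProd, S.trans_swap_eq_swap_trans, Pi.smul_apply,
    neg_one_smul, ← neg_mul]
  exact congrArg (· * _) this

/-- The Plücker relation exchanging `a` with each label of the row of `b` in `T`; all its terms
but one have a multiple edge. -/
theorem cls_snd_trans_swap (S T : Filling n d) {a b : Fin (d * n)} (hab : a ≠ b)
    (hS : (S.symm a).1 = (S.symm b).1) (hT : (T.symm a).1 ≠ (T.symm b).1) :
    cls (S, T.trans (swap a b)) = cls (S, T) := by
  set j := (T.symm b).1
  have hplucker : cls (S, T) = ∑ c, cls (S, T.trans (swap a (T (j, c)))) := by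
    refine cls_eq_sum_of_phiFun_eq (funext fun vw => ?_)
    simp only [phiFun_eq_detProd_mul_detProd, Finset.sum_apply, ← Finset.mul_sum,
      T.trans_swap_eq_swap_trans, T.symm_apply_apply]
    rw [detProd_eq_sum_detProd_comp_swap (fun x => (vw (T x)).2) hT]
    rfl
  rw [hplucker, Finset.sum_eq_single (T.symm b).2]
  · simp [j]
  · intro c _ hc
    have hb : T (j, c) ≠ b := fun h => hc (by rw [← h, T.symm_apply_apply])
    refine cls_eq_zero (Or.inr ⟨a, b, hab, hS, ?_⟩)
    have hba : b ≠ a := hab.symm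
    simp [swap_apply_of_ne_of_ne hba hb.symm, j]
  · simp

end Exchange

section Connected

variable {n d : ℕ}

def signedRelabelings (ST : Filling n d × Filling n d) : Submonoid (Perm (Fin (d * n))) where
  carrier := {π | cls (relabel π ST) = (Perm.sign π : ℚ) • cls ST}
  one_mem' := by simp [relabel, Perm.one_def]
  mul_mem' {π ρ} (hπ : cls (relabel π ST) = _) (hρ : cls (relabel ρ ST) = _) := by
    have hcomp : relabel (π * ρ) ST = relabel π (relabel ρ ST) := by
      simp [relabel, Perm.mul_def, Equiv.trans_assoc]
    change cls _ = _
    rw [hcomp, cls_relabel_eq_smul π hρ, hπ, smul_smul, Perm.sign_mul, Units.val_mul,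
      Int.cast_mul, mul_comm]

theorem swap_mem_signedRelabelings_of_fst_eq (ST : Filling n d × Filling n d)
    {x y : Fin (d * n)} (hxy : x ≠ y) (hrow : (ST.1.symm x).1 = (ST.1.symm y).1) :
    swap x y ∈ signedRelabelings ST := by
  obtain ⟨S, T⟩ := ST
  change cls (relabel (swap x y) (S, T)) = _
  rw [Perm.sign_swap hxy, Units.val_neg, Units.val_one, Int.cast_neg, Int.cast_one,
    neg_one_smul]
  by_cases hT : (T.symm x).1 = (T.symm y).1
  · have hST : HasMultipleEdge n d (S, T) := ⟨x, y, hxy, hrow, hT⟩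
    rw [cls_eq_zero (Or.inr (hST.relabel (swap x y))), cls_eq_zero (Or.inr hST), neg_zero]
  · rw [relabel, cls_fst_trans_swap S _ hxy hrow, cls_snd_trans_swap S T hxy hrow hT]

theorem swap_mem_signedRelabelings_of_snd_eq (ST : Filling n d × Filling n d)
    {x y : Fin (d * n)} (hxy : x ≠ y) (hrow : (ST.2.symm x).1 = (ST.2.symm y).1) :
    swap x y ∈ signedRelabelings ST :=
  cls_swap_eq_smul (swap_mem_signedRelabelings_of_fst_eq ST.swap hxy hrow)

def IsRowOf (ST : Filling n d × Filling n d) (u : Fin d ⊕ Fin d) (k : Fin (d * n)) : Prop :=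
  u = Sum.inl (ST.1.symm k).1 ∨ u = Sum.inr (ST.2.symm k).1

theorem exists_isRowOf_of_adj {ST : Filling n d × Filling n d} {u v : Fin d ⊕ Fin d}
    (h : (graphOf n d ST).Adj u v) : ∃ k, IsRowOf ST u k ∧ IsRowOf ST v k := by
  obtain ⟨-, ⟨i, j, rfl, rfl, k, hi, hj⟩ | ⟨i, j, rfl, rfl, k, hi, hj⟩⟩ := h
  · exact ⟨k, Or.inl (by rw [hi]), Or.inr (by rw [hj])⟩
  · exact ⟨k, Or.inr (by rw [hj]), Or.inl (by rw [hi])⟩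

theorem Submonoid.eq_top_of_graphOf_connected {ST : Filling n d × Filling n d}
    (hconn : (graphOf n d ST).Connected) (H : Submonoid (Perm (Fin (d * n))))
    (hH : ∀ x y, x ≠ y → (ST.1.symm x).1 = (ST.1.symm y).1 ∨ (ST.2.symm x).1 = (ST.2.symm y).1 →
      swap x y ∈ H) : H = ⊤ := by
  have hrow : ∀ u k k', IsRowOf ST u k → IsRowOf ST u k' → swap k k' ∈ H := by
    intro u k k' hk hk'
    rcases eq_or_ne k k' with rfl | hne
    · rw [swap_self]
      exact H.one_mem
    refine hH k k' hne ?_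
    rcases hk with rfl | rfl <;> rcases hk' with h | h <;> simp_all
  have hwalk : ∀ u v (w : (graphOf n d ST).Walk u v) k k', IsRowOf ST u k → IsRowOf ST v k' →
      swap k k' ∈ H := by
    intro u v w
    induction w with
    | nil => exact hrow _
    | cons hadj _ ih =>
      intro k k' hk hk'
      obtain ⟨m, hm, hm'⟩ := exists_isRowOf_of_adj hadj
      exact SubmonoidClass.swap_mem_trans H (hrow _ k m hk hm) (ih m k' hm' hk')
  rw [eq_top_iff, ← Perm.mclosure_isSwap, Submonoid.closure_le]
  rintro _ ⟨x, y, -, rfl⟩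
  exact hwalk _ _ (hconn.preconnected _ _).some x y (Or.inl rfl) (Or.inl rfl)

theorem cls_eq_zero_of_connected (hn : 0 < n) (hd : n + 1 ≤ d) {ST : Filling n d × Filling n d}
    (hconn : (graphOf n d ST).Connected) : cls ST = 0 := by
  have htop := Submonoid.eq_top_of_graphOf_connected hconn (signedRelabelings ST)
    fun x y hxy h => h.elim (swap_mem_signedRelabelings_of_fst_eq ST hxy)
      (swap_mem_signedRelabelings_of_snd_eq ST hxy)
  have hrelabel : ∀ π, cls (relabel π ST) = (Perm.sign π : ℚ) • cls ST := fun π =>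
    (htop ▸ Submonoid.mem_top π : π ∈ signedRelabelings ST)
  have hlt : n * n < d * n := Nat.mul_lt_mul_of_pos_right hd hn
  have hsum := sum_smul_cls_eq_zero_of_phiFun (c := fun π => (Perm.sign π : ℚ))
    (A := fun π => relabel π ST)
    (funext fun vw => by simpa using sum_sign_mul_phiFun_relabel_eq_zero ST hlt vw)
  simp only [hrelabel, smul_smul, ← Int.cast_mul, ← Units.val_mul, Int.units_mul_self,
    Units.val_one, Int.cast_one, one_smul, Finset.sum_const, Finset.card_univ] at hsum
  rw [← Nat.cast_smul_eq_nsmul ℚ] at hsum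
  exact (smul_eq_zero.1 hsum).resolve_left (Nat.cast_ne_zero.2 Fintype.card_ne_zero)

end Connected

/-- If `d ≥ n+1`, then `𝒫` is spanned by `ker φ` together with the basis elements `(S,T)`
that are disconnected or have a multiple edge. -/
theorem stmt2 (n d : ℕ) (hn : 0 < n) (hd : n + 1 ≤ d) :
    Submodule.span ℚ
      ({x : PSpace n d | ∃ ST : Filling n d × Filling n d,
          (IsDisconnected n d ST ∨ HasMultipleEdge n d ST) ∧ x = Finsupp.single ST 1}
        ∪ (LinearMap.ker (phi n d) : Set (PSpace n d))) = ⊤ := by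
  change negligible n d = ⊤
  rw [eq_top_iff, ← Finsupp.basisSingleOne.span_eq, Submodule.span_le]
  rintro _ ⟨ST, rfl⟩
  refine (Submodule.Quotient.mk_eq_zero _).1 ?_
  by_cases h : IsDisconnected n d ST ∨ HasMultipleEdge n d ST
  · exact cls_eq_zero h
  · exact cls_eq_zero_of_connected hn hd (not_not.1 fun hc => h (Or.inl hc))
end
end

section
/- For every (d,n)-correlated diagram D, the ℚ[S_{dn}]-submodule 𝒞(D) of W(d) spanned by the classes of all pairs of fillings of shape D is isomorphic, as a module over the group algebra ℚ[S_{dn}], to the row tabloid module ℛ(δ(D)). -/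
noncomputable section

/-- The antisymmetry elements of `𝒫`. -/
def AntisymSet (n d : ℕ) : Set (PSpace n d) :=
  {x | ∃ (S T : Filling n d) (i : Fin d) (c₁ c₂ : Fin n), c₁ ≠ c₂ ∧
    (x = Finsupp.single (S, T) 1 +
          Finsupp.single ((Equiv.swap (i, c₁) (i, c₂)).trans S, T) 1 ∨
     x = Finsupp.single (S, T) 1 +
          Finsupp.single (S, (Equiv.swap (i, c₁) (i, c₂)).trans T) 1)}

/-- `W(d)`: the quotient of `𝒫` by the span of the antisymmetry elements. -/
abbrev Wspace (n d : ℕ) := PSpace n d ⧸ Submodule.span ℚ (AntisymSet n d)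

/-- A `(d,n)`-correlated diagram: a `d × d` array of naturals whose row sums and
column sums all equal `n`. -/
def CorrDiagram (n d : ℕ) :=
  {D : Fin d × Fin d → ℕ //
    (∀ i : Fin d, ∑ j : Fin d, D (i, j) = n) ∧ (∀ j : Fin d, ∑ i : Fin d, D (i, j) = n)}

open Classical in
/-- The shape of a pair of fillings `(S,T)`:
`D_{S,T}(i,j) = #{k : k occurs in row i of S and in row j of T}`. -/
def shapeOf (n d : ℕ) (ST : Filling n d × Filling n d) : Fin d × Fin d → ℕ :=
  fun ij => (Finset.univ.filter (fun k : Fin (d * n) =>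
    (ST.1.symm k).1 = ij.1 ∧ (ST.2.symm k).1 = ij.2)).card

/-- `δ(D)`: the entries of the diagram `D`, listed in non-increasing order. -/
def delta (n d : ℕ) (D : Fin d × Fin d → ℕ) : List ℕ :=
  (Multiset.sort (Multiset.map D Finset.univ.val) (· ≤ ·)).reverse

/-- A row tabloid of shape `l` on the ground set `Fin N`: a tuple of pairwise disjoint
subsets covering `Fin N`, the `t`-th having `l.get t` elements. -/
structure RowTabloid (N : ℕ) (l : List ℕ) where
  parts : Fin l.length → Finset (Fin N)
  disjoint : ∀ t t' : Fin l.length, t ≠ t' → Disjoint (parts t) (parts t')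
  cover : ∀ x : Fin N, ∃ t, x ∈ parts t
  cards : ∀ t, (parts t).card = l.get t

/-- The row tabloid module `ℛ(l)`: the free `ℚ`-vector space on row tabloids of shape `l`. -/
abbrev RowTabloidModule (N : ℕ) (l : List ℕ) := RowTabloid N l →₀ ℚ

/-- The action of a permutation of the ground set on row tabloids:
`σ·(P₁,…,P_ℓ) = (σ(P₁),…,σ(P_ℓ))`. -/
def permTabloid (N : ℕ) (l : List ℕ) (σ : Equiv.Perm (Fin N)) (P : RowTabloid N l) :
    RowTabloid N l where
  parts := fun t => (P.parts t).map σ.toEmbedding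
  disjoint := fun t t' h => (Finset.disjoint_map _).mpr (P.disjoint t t' h)
  cover := fun x => by
    obtain ⟨t, ht⟩ := P.cover (σ.symm x)
    exact ⟨t, Finset.mem_map.mpr ⟨σ.symm x, ht, by simp⟩⟩
  cards := fun t => by simp [Finset.card_map, P.cards]

/-- `𝒞(D)`: the submodule of `W(d)` spanned by the classes of all pairs of fillings of
shape `D`. -/
def Cmod (n d : ℕ) (D : CorrDiagram n d) : Submodule ℚ (Wspace n d) :=
  Submodule.span ℚ
    {w | ∃ ST : Filling n d × Filling n d, shapeOf n d ST = D.1 ∧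
      w = (Submodule.Quotient.mk (Finsupp.single ST (1 : ℚ)) : Wspace n d)}

/-!
Modulo antisymmetry, row-preserving permutations of either filling act on the class `[S, T]` by
their sign, so `sign (T⁻¹ ∘ S) • [S, T]` depends only on the row sets of `S` and `T`. These row
sets are recorded by the labelling `k ↦ (row of k in S, row of k in T)`, whose fibres have sizes
`D (i, j)` for a pair of shape `D`: once the `d²` entries of `D` are matched with the rows of
`δ(D)`, this is a row tabloid of shape `δ(D)`, and every such tabloid arises. Sending
`sign (T⁻¹ ∘ S) • [S, T]` to its tabloid therefore identifies `𝒞(D)` with `ℛ(δ(D))`, and since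
relabelling does not change `T⁻¹ ∘ S`, the identification commutes with the action of `S_{dn}`.
-/

open Finset

namespace Equiv

theorem apply_swap_apply_of_apply_eq {α γ : Type*} [DecidableEq α] {p : α → γ} {a b : α}
    (h : p a = p b) (x : α) : p (swap a b x) = p x := by
  rw [swap_apply_def]
  split_ifs with ha hb
  · rw [ha, h]
  · rw [hb, h]
  · rfl

namespace Perm

theorem apply_trans_eq_sign_smul {α β γ M : Type*} [Fintype α] [DecidableEq α]
    [AddCommGroup M] (p : α → γ) (f : (α ≃ β) → M)
    (hf : ∀ (S : α ≃ β) (a b : α), a ≠ b → p a = p b → f ((swap a b).trans S) = -f S)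
    {π : Perm α} (hπ : ∀ x, p (π x) = p x) (S : α ≃ β) :
    f (π.trans S) = sign π • f S := by
  induction h : π.support.card using Nat.strong_induction_on generalizing π S with
  | _ k ih =>
    by_cases h1 : π = 1
    · subst h1
      simp [Equiv.Perm.one_def]
    obtain ⟨x, hx⟩ : ∃ x, π x ≠ x := not_forall.mp fun h' => h1 (Equiv.ext h')
    -- peel off the swap of `x` and `π x`: it stays inside a fibre of `p` and shrinks the support
    have hπ' : ∀ y, p ((swap x (π x) * π) y) = p y := fun y =>
      (apply_swap_apply_of_apply_eq (hπ x).symm (π y)).trans (hπ y)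
    have hdecomp : π.trans S = (swap x (π x) * π).trans ((swap x (π x)).trans S) := by
      ext y; simp [Perm.mul_apply]
    rw [hdecomp, ih _ (h ▸ card_support_swap_mul hx) hπ' _ rfl, hf S _ _ hx.symm (hπ x).symm,
      sign_mul, sign_swap hx.symm]
    simp [Units.neg_smul]

end Perm

end Equiv

theorem Fintype.exists_equiv_of_map_univ_eq {α β γ : Type*} [Fintype α] [Fintype β]
    {f : α → γ} {g : β → γ} (h : univ.val.map f = univ.val.map g) :
    ∃ e : α ≃ β, ∀ x, g (e x) = f x := by
  classical
  have hcard : ∀ c, Fintype.card {a // f a = c} = Fintype.card {b // g b = c} := fun c => by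
    have := congrArg (Multiset.count c) h
    simp only [Multiset.count_map, eq_comm (a := c)] at this
    simpa only [Fintype.card_subtype, Finset.card, Finset.filter_val] using this
  exact ⟨Equiv.ofFiberEquiv fun c => Fintype.equivOfCardEq (hcard c), Equiv.ofFiberEquiv_map _⟩

theorem exists_equiv_get_delta {n d : ℕ} (D : Fin d × Fin d → ℕ) :
    ∃ e : (Fin d × Fin d) ≃ Fin (delta n d D).length, ∀ x, (delta n d D).get (e x) = D x := by
  refine Fintype.exists_equiv_of_map_univ_eq ?_
  rw [Fin.univ_val_map, List.ofFn_get, delta, Multiset.coe_reverse, Multiset.sort_eq]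

namespace RowTabloid

variable {N : ℕ} {l : List ℕ}

theorem ext_parts {P Q : RowTabloid N l} (h : P.parts = Q.parts) : P = Q := by
  cases P; cases Q; cases h; rfl

def ofFiber (f : Fin N → Fin l.length) (hf : ∀ t, #{x | f x = t} = l.get t) :
    RowTabloid N l where
  parts t := {x | f x = t}
  disjoint t t' h := disjoint_filter.mpr fun _ _ hx hx' => h (hx ▸ hx')
  cover x := ⟨f x, by simp⟩
  cards := hf

def rowIndex (P : RowTabloid N l) (x : Fin N) : Fin l.length := (P.cover x).choose

theorem mem_parts_iff (P : RowTabloid N l) {x : Fin N} {t : Fin l.length} :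
    x ∈ P.parts t ↔ P.rowIndex x = t :=
  ⟨fun hx => by_contra fun h => disjoint_left.mp (P.disjoint _ _ h) (P.cover x).choose_spec hx,
    fun h => h ▸ (P.cover x).choose_spec⟩

theorem parts_eq_filter (P : RowTabloid N l) (t : Fin l.length) :
    P.parts t = univ.filter fun x => P.rowIndex x = t := by
  ext x
  simp [mem_parts_iff]

theorem card_filter_rowIndex (P : RowTabloid N l) (t : Fin l.length) :
    #{x | P.rowIndex x = t} = l.get t := by
  rw [← parts_eq_filter, P.cards]

theorem ofFiber_rowIndex (P : RowTabloid N l) : ofFiber P.rowIndex P.card_filter_rowIndex = P :=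
  ext_parts (funext fun t => (parts_eq_filter P t).symm)

theorem rowIndex_ofFiber (f : Fin N → Fin l.length) (hf : ∀ t, #{x | f x = t} = l.get t) :
    (ofFiber f hf).rowIndex = f :=
  funext fun x => (mem_parts_iff _).mp (by simp [ofFiber])

theorem ofFiber_comp_symm (σ : Equiv.Perm (Fin N)) {f : Fin N → Fin l.length}
    (hf : ∀ t, #{x | f x = t} = l.get t) (hf' : ∀ t, #{x | f (σ.symm x) = t} = l.get t) :
    ofFiber (fun x => f (σ.symm x)) hf' = permTabloid N l σ (ofFiber f hf) := by
  refine ext_parts (funext fun t => ?_)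
  ext x
  simp [ofFiber, permTabloid]

end RowTabloid

section Fillings

variable {n d : ℕ}

def rowOf (S : Filling n d) (k : Fin (d * n)) : Fin d := (S.symm k).1

theorem rowOf_perm_trans {π : Equiv.Perm (Fin d × Fin n)} (hπ : ∀ x, (π x).1 = x.1)
    (S : Filling n d) : rowOf (π.trans S) = rowOf S := by
  funext k
  simpa [rowOf] using (hπ (π.symm (S.symm k))).symm

theorem fst_trans_symm_of_rowOf_eq {S S' : Filling n d} (h : rowOf S = rowOf S')
    (x : Fin d × Fin n) : ((S.trans S'.symm) x).1 = x.1 := by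
  simpa [rowOf] using (congrFun h (S x)).symm

theorem exists_filling_rowOf_eq (r : Fin (d * n) → Fin d) (hr : ∀ i, #{k | r k = i} = n) :
    ∃ S : Filling n d, rowOf S = r := by
  have e : ∀ i, {k // r k = i} ≃ Fin n := fun i =>
    Fintype.equivFinOfCardEq (by rw [Fintype.card_subtype, hr])
  refine ⟨((Equiv.sigmaEquivProd (Fin d) (Fin n)).symm.trans
    (Equiv.sigmaCongrRight e).symm).trans (Equiv.sigmaFiberEquiv r), funext fun k => ?_⟩
  simp [rowOf]

theorem shapeOf_eq_iff {S T : Filling n d} {D : Fin d × Fin d → ℕ} :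
    shapeOf n d (S, T) = D ↔ ∀ x, #{k | (rowOf S k, rowOf T k) = x} = D x := by
  classical
  refine funext_iff.trans (forall_congr' fun x => ?_)
  simp only [shapeOf, rowOf, Prod.ext_iff]

def pairSign (S T : Filling n d) : ℤˣ := Equiv.Perm.sign (S.trans T.symm)

theorem pairSign_perm_trans_left (π : Equiv.Perm (Fin d × Fin n)) (S T : Filling n d) :
    pairSign (π.trans S) T = pairSign S T * Equiv.Perm.sign π := by
  rw [pairSign, pairSign, ← Equiv.Perm.sign_mul]
  rfl

theorem pairSign_perm_trans_right (ρ : Equiv.Perm (Fin d × Fin n)) (S T : Filling n d) :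
    pairSign S (ρ.trans T) = Equiv.Perm.sign ρ * pairSign S T := by
  rw [pairSign, pairSign, ← Equiv.Perm.sign_inv ρ, ← Equiv.Perm.sign_mul]
  rfl

theorem pairSign_trans_trans (S T : Filling n d) (σ : Equiv.Perm (Fin (d * n))) :
    pairSign (S.trans σ) (T.trans σ) = pairSign S T := by
  simp only [pairSign]
  congr 1
  exact Equiv.ext fun x => by simp

end Fillings

section Classes

variable {n d : ℕ}

def pairClass (S T : Filling n d) : Wspace n d :=
  Submodule.Quotient.mk (Finsupp.single (S, T) 1)

theorem pairClass_swap_trans_left {a b : Fin d × Fin n} (hab : a ≠ b) (h : a.1 = b.1)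
    (S T : Filling n d) : pairClass ((Equiv.swap a b).trans S) T = -pairClass S T := by
  rcases a with ⟨i, c₁⟩
  rcases b with ⟨_, c₂⟩
  obtain rfl : i = _ := h
  refine eq_neg_of_add_eq_zero_right ?_
  rw [pairClass, pairClass, ← Submodule.Quotient.mk_add, Submodule.Quotient.mk_eq_zero]
  exact Submodule.subset_span ⟨S, T, i, c₁, c₂, fun hc => hab (hc ▸ rfl), Or.inl rfl⟩

theorem pairClass_swap_trans_right {a b : Fin d × Fin n} (hab : a ≠ b) (h : a.1 = b.1)
    (S T : Filling n d) : pairClass S ((Equiv.swap a b).trans T) = -pairClass S T := by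
  rcases a with ⟨i, c₁⟩
  rcases b with ⟨_, c₂⟩
  obtain rfl : i = _ := h
  refine eq_neg_of_add_eq_zero_right ?_
  rw [pairClass, pairClass, ← Submodule.Quotient.mk_add, Submodule.Quotient.mk_eq_zero]
  exact Submodule.subset_span ⟨S, T, i, c₁, c₂, fun hc => hab (hc ▸ rfl), Or.inr rfl⟩

theorem pairClass_perm_trans_left {π : Equiv.Perm (Fin d × Fin n)} (hπ : ∀ x, (π x).1 = x.1)
    (S T : Filling n d) : pairClass (π.trans S) T = Equiv.Perm.sign π • pairClass S T :=
  Equiv.Perm.apply_trans_eq_sign_smul Prod.fst (pairClass · T)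
    (fun S _ _ hab h => pairClass_swap_trans_left hab h S T) hπ S

theorem pairClass_perm_trans_right {ρ : Equiv.Perm (Fin d × Fin n)} (hρ : ∀ x, (ρ x).1 = x.1)
    (S T : Filling n d) : pairClass S (ρ.trans T) = Equiv.Perm.sign ρ • pairClass S T :=
  Equiv.Perm.apply_trans_eq_sign_smul Prod.fst (pairClass S)
    (fun T _ _ hab h => pairClass_swap_trans_right hab h S T) hρ T

def signedClass (S T : Filling n d) : Wspace n d := pairSign S T • pairClass S T

theorem signedClass_eq_of_rowOf_eq {S S' T T' : Filling n d} (hS : rowOf S = rowOf S')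
    (hT : rowOf T = rowOf T') : signedClass S T = signedClass S' T' := by
  obtain ⟨π, hπ, rfl⟩ : ∃ π : Equiv.Perm (Fin d × Fin n), (∀ x, (π x).1 = x.1) ∧ π.trans S' = S :=
    ⟨S.trans S'.symm, fst_trans_symm_of_rowOf_eq hS, by ext; simp⟩
  obtain ⟨ρ, hρ, rfl⟩ : ∃ ρ : Equiv.Perm (Fin d × Fin n), (∀ x, (ρ x).1 = x.1) ∧ ρ.trans T' = T :=
    ⟨T.trans T'.symm, fst_trans_symm_of_rowOf_eq hT, by ext; simp⟩
  rw [signedClass, signedClass, pairSign_perm_trans_left, pairSign_perm_trans_right,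
    pairClass_perm_trans_left hπ, pairClass_perm_trans_right hρ, smul_smul, smul_smul]
  congr 1
  calc _ = pairSign S' T' * (Equiv.Perm.sign π * Equiv.Perm.sign π) *
        (Equiv.Perm.sign ρ * Equiv.Perm.sign ρ) := by ac_rfl
    _ = pairSign S' T' := by rw [Int.units_mul_self, Int.units_mul_self, mul_one, mul_one]

end Classes

section Tabloids

/-- Matches the entries of `D` with the rows of `δ(D)`, so that a labelling of `Fin (d * n)` by
the cells of `D` with fibres of sizes `D` becomes a row tabloid of shape `δ(D)`. -/
def entryIndex (n : ℕ) {d : ℕ} (D : Fin d × Fin d → ℕ) :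
    (Fin d × Fin d) ≃ Fin (delta n d D).length :=
  (exists_equiv_get_delta D).choose

theorem get_entryIndex (n : ℕ) {d : ℕ} (D : Fin d × Fin d → ℕ) (x : Fin d × Fin d) :
    (delta n d D).get (entryIndex n D x) = D x :=
  (exists_equiv_get_delta D).choose_spec x

variable {n d : ℕ} (D : Fin d × Fin d → ℕ)

def tabloidOfRows (r c : Fin (d * n) → Fin d) (h : ∀ x, #{k | (r k, c k) = x} = D x) :
    RowTabloid (d * n) (delta n d D) :=
  RowTabloid.ofFiber (fun k => entryIndex n D (r k, c k)) fun t => by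
    simp_rw [← Equiv.eq_symm_apply]
    rw [h, ← get_entryIndex n D, Equiv.apply_symm_apply]

theorem tabloidOfRows_comp_symm (σ : Equiv.Perm (Fin (d * n))) {r c : Fin (d * n) → Fin d}
    (h : ∀ x, #{k | (r k, c k) = x} = D x)
    (h' : ∀ x, #{k | (r (σ.symm k), c (σ.symm k)) = x} = D x) :
    tabloidOfRows D (fun k => r (σ.symm k)) (fun k => c (σ.symm k)) h' =
      permTabloid (d * n) (delta n d D) σ (tabloidOfRows D r c h) :=
  RowTabloid.ofFiber_comp_symm σ (f := fun k => entryIndex n D (r k, c k)) _ _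

def tabloidEntry (P : RowTabloid (d * n) (delta n d D)) (k : Fin (d * n)) : Fin d × Fin d :=
  (entryIndex n D).symm (P.rowIndex k)

theorem tabloidEntry_tabloidOfRows (r c : Fin (d * n) → Fin d)
    (h : ∀ x, #{k | (r k, c k) = x} = D x) (k : Fin (d * n)) :
    tabloidEntry D (tabloidOfRows D r c h) k = (r k, c k) := by
  simp [tabloidEntry, tabloidOfRows, RowTabloid.rowIndex_ofFiber]

theorem card_filter_tabloidEntry (P : RowTabloid (d * n) (delta n d D)) (x : Fin d × Fin d) :
    #{k | tabloidEntry D P k = x} = D x := by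
  simp_rw [tabloidEntry, Equiv.symm_apply_eq]
  rw [P.card_filter_rowIndex, get_entryIndex]

theorem tabloidOfRows_eq_self (P : RowTabloid (d * n) (delta n d D)) {r c : Fin (d * n) → Fin d}
    (hrc : ∀ k, (r k, c k) = tabloidEntry D P k) (h : ∀ x, #{k | (r k, c k) = x} = D x) :
    tabloidOfRows D r c h = P := by
  conv_rhs => rw [← P.ofFiber_rowIndex]
  simp only [tabloidOfRows, hrc, tabloidEntry, Equiv.apply_symm_apply]

/-- Labellings whose fibres do not have the sizes `D` are sent to `0`. -/
def tabloidTerm (r c : Fin (d * n) → Fin d) : RowTabloidModule (d * n) (delta n d D) :=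
  if h : ∀ x, #{k | (r k, c k) = x} = D x then Finsupp.single (tabloidOfRows D r c h) 1 else 0

theorem tabloidTerm_of {r c : Fin (d * n) → Fin d} (h : ∀ x, #{k | (r k, c k) = x} = D x) :
    tabloidTerm D r c = Finsupp.single (tabloidOfRows D r c h) 1 :=
  dif_pos h

end Tabloids

section ToTabloid

variable {n d : ℕ} (D : Fin d × Fin d → ℕ)

def pspaceToTabloid : PSpace n d →ₗ[ℚ] RowTabloidModule (d * n) (delta n d D) :=
  Finsupp.linearCombination ℚ fun ST =>
    pairSign ST.1 ST.2 • tabloidTerm D (rowOf ST.1) (rowOf ST.2)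

theorem pspaceToTabloid_eq_zero {x : PSpace n d} (hx : x ∈ AntisymSet n d) :
    pspaceToTabloid D x = 0 := by
  obtain ⟨S, T, i, c₁, c₂, hc, rfl | rfl⟩ := hx
  all_goals
    have hrow :=
      Equiv.apply_swap_apply_of_apply_eq (p := Prod.fst) (a := (i, c₁)) (b := (i, c₂)) rfl
    have hsign := Equiv.Perm.sign_swap (show ((i, c₁) : Fin d × Fin n) ≠ (i, c₂) by simpa)
    simp [pspaceToTabloid, rowOf_perm_trans hrow, pairSign_perm_trans_left,
      pairSign_perm_trans_right, hsign, Units.neg_smul]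

def toTabloid : Wspace n d →ₗ[ℚ] RowTabloidModule (d * n) (delta n d D) :=
  (Submodule.span ℚ (AntisymSet n d)).liftQ (pspaceToTabloid D)
    (Submodule.span_le.mpr fun _ hx => pspaceToTabloid_eq_zero D hx)

theorem toTabloid_pairClass (S T : Filling n d) :
    toTabloid D (pairClass S T) = pairSign S T • tabloidTerm D (rowOf S) (rowOf T) := by
  simp [toTabloid, pairClass, pspaceToTabloid]

theorem toTabloid_signedClass {S T : Filling n d}
    (h : ∀ x, #{k | (rowOf S k, rowOf T k) = x} = D x) :
    toTabloid D (signedClass S T) = Finsupp.single (tabloidOfRows D (rowOf S) (rowOf T) h) 1 := by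
  rw [signedClass, map_zsmul_unit, toTabloid_pairClass, smul_smul, Int.units_mul_self, one_smul,
    tabloidTerm_of D h]

theorem toTabloid_pairClass_trans (σ : Equiv.Perm (Fin (d * n))) {S T : Filling n d}
    (h : shapeOf n d (S, T) = D) (h' : shapeOf n d (S.trans σ, T.trans σ) = D) :
    toTabloid D (pairClass (S.trans σ) (T.trans σ)) =
      Finsupp.mapDomain (permTabloid (d * n) (delta n d D) σ) (toTabloid D (pairClass S T)) := by
  rw [toTabloid_pairClass, toTabloid_pairClass, pairSign_trans_trans,
    tabloidTerm_of D (shapeOf_eq_iff.mp h), tabloidTerm_of D (shapeOf_eq_iff.mp h'),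
    Finsupp.mapDomain_smul, Finsupp.mapDomain_single]
  congr 2
  exact tabloidOfRows_comp_symm D σ (r := rowOf S) (c := rowOf T) _ _

end ToTabloid

section OfTabloid

variable {n d : ℕ} (D : CorrDiagram n d)

theorem card_filter_fst_tabloidEntry (P : RowTabloid (d * n) (delta n d D.1)) (i : Fin d) :
    #{k | (tabloidEntry D.1 P k).1 = i} = n := by
  rw [card_eq_sum_card_fiberwise (f := fun k => (tabloidEntry D.1 P k).2) (t := univ) (by simp)]
  refine (sum_congr rfl fun j _ => ?_).trans (D.2.1 i)
  rw [filter_filter, ← card_filter_tabloidEntry D.1 P]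
  simp only [Prod.ext_iff]

theorem card_filter_snd_tabloidEntry (P : RowTabloid (d * n) (delta n d D.1)) (j : Fin d) :
    #{k | (tabloidEntry D.1 P k).2 = j} = n := by
  rw [card_eq_sum_card_fiberwise (f := fun k => (tabloidEntry D.1 P k).1) (t := univ) (by simp)]
  refine (sum_congr rfl fun i _ => ?_).trans (D.2.2 j)
  rw [filter_filter, ← card_filter_tabloidEntry D.1 P]
  simp only [Prod.ext_iff, and_comm]

def leftFilling (P : RowTabloid (d * n) (delta n d D.1)) : Filling n d :=
  (exists_filling_rowOf_eq _ (card_filter_fst_tabloidEntry D P)).choose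

def rightFilling (P : RowTabloid (d * n) (delta n d D.1)) : Filling n d :=
  (exists_filling_rowOf_eq _ (card_filter_snd_tabloidEntry D P)).choose

theorem rowOf_leftFilling (P : RowTabloid (d * n) (delta n d D.1)) :
    rowOf (leftFilling D P) = fun k => (tabloidEntry D.1 P k).1 :=
  (exists_filling_rowOf_eq _ (card_filter_fst_tabloidEntry D P)).choose_spec

theorem rowOf_rightFilling (P : RowTabloid (d * n) (delta n d D.1)) :
    rowOf (rightFilling D P) = fun k => (tabloidEntry D.1 P k).2 :=
  (exists_filling_rowOf_eq _ (card_filter_snd_tabloidEntry D P)).choose_spec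

theorem card_filter_rowOf_leftFilling_rightFilling (P : RowTabloid (d * n) (delta n d D.1))
    (x : Fin d × Fin d) :
    #{k | (rowOf (leftFilling D P) k, rowOf (rightFilling D P) k) = x} = D.1 x := by
  simpa [rowOf_leftFilling, rowOf_rightFilling] using card_filter_tabloidEntry D.1 P x

def ofTabloid : RowTabloidModule (d * n) (delta n d D.1) →ₗ[ℚ] Wspace n d :=
  Finsupp.linearCombination ℚ fun P => signedClass (leftFilling D P) (rightFilling D P)

theorem ofTabloid_mem_Cmod (x : RowTabloidModule (d * n) (delta n d D.1)) :
    ofTabloid D x ∈ Cmod n d D := by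
  have hrange : LinearMap.range (ofTabloid D) ≤ Cmod n d D := by
    rw [ofTabloid, Finsupp.range_linearCombination, Submodule.span_le]
    rintro _ ⟨P, rfl⟩
    exact Submodule.smul_of_tower_mem _ _ (Submodule.subset_span
      ⟨_, shapeOf_eq_iff.mpr (card_filter_rowOf_leftFilling_rightFilling D P), rfl⟩)
  exact hrange (LinearMap.mem_range_self _ x)

theorem toTabloid_ofTabloid : (toTabloid D.1).comp (ofTabloid D) = LinearMap.id := by
  refine Finsupp.lhom_ext' fun P => LinearMap.ext_ring ?_
  simp only [LinearMap.comp_apply, Finsupp.lsingle_apply, ofTabloid,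
    Finsupp.linearCombination_single, one_smul, LinearMap.id_apply]
  rw [toTabloid_signedClass D.1 (card_filter_rowOf_leftFilling_rightFilling D P),
    tabloidOfRows_eq_self D.1 P fun k => by rw [rowOf_leftFilling, rowOf_rightFilling]]

theorem ofTabloid_toTabloid {w : Wspace n d} (hw : w ∈ Cmod n d D) :
    ofTabloid D (toTabloid D.1 w) = w := by
  induction hw using Submodule.span_induction with
  | mem x hx =>
    obtain ⟨⟨S, T⟩, h, rfl⟩ := hx
    have hST := shapeOf_eq_iff.mp h
    change ofTabloid D (toTabloid D.1 (pairClass S T)) = pairClass S T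
    rw [toTabloid_pairClass, tabloidTerm_of D.1 hST, map_zsmul_unit, ofTabloid,
      Finsupp.linearCombination_single, one_smul,
      signedClass_eq_of_rowOf_eq (S' := S) (T' := T)
        (by rw [rowOf_leftFilling]; exact funext fun k => by rw [tabloidEntry_tabloidOfRows])
        (by rw [rowOf_rightFilling]; exact funext fun k => by rw [tabloidEntry_tabloidOfRows]),
      signedClass, smul_smul, Int.units_mul_self, one_smul]
  | zero => simp
  | add x y _ _ hx hy => rw [map_add, map_add, hx, hy]
  | smul a x _ hx => rw [map_smul, map_smul, hx]

end OfTabloid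

def cmodEquivRowTabloidModule {n d : ℕ} (D : CorrDiagram n d) :
    Cmod n d D ≃ₗ[ℚ] RowTabloidModule (d * n) (delta n d D.1) :=
  LinearEquiv.ofLinearMap ((toTabloid D.1).comp (Cmod n d D).subtype)
    ((ofTabloid D).codRestrict _ (ofTabloid_mem_Cmod D))
    (toTabloid_ofTabloid D)
    (LinearMap.ext fun w => Subtype.ext (ofTabloid_toTabloid D w.2))

theorem stmt7_general (n d : ℕ) (D : CorrDiagram n d) :
    ∃ e : Cmod n d D ≃ₗ[ℚ] RowTabloidModule (d * n) (delta n d D.1),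
      ∀ (σ : Equiv.Perm (Fin (d * n))) (S T : Filling n d)
        (h : shapeOf n d (S, T) = D.1)
        (h' : shapeOf n d (S.trans σ, T.trans σ) = D.1),
        e ⟨(Submodule.Quotient.mk
              (Finsupp.single ((S.trans σ, T.trans σ) : Filling n d × Filling n d) (1 : ℚ))
              : Wspace n d),
            Submodule.subset_span ⟨(S.trans σ, T.trans σ), h', rfl⟩⟩ =
        Finsupp.mapDomain (permTabloid (d * n) (delta n d D.1) σ)
          (e ⟨(Submodule.Quotient.mk
                (Finsupp.single ((S, T) : Filling n d × Filling n d) (1 : ℚ))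
                : Wspace n d),
              Submodule.subset_span ⟨(S, T), h, rfl⟩⟩) :=
  ⟨cmodEquivRowTabloidModule D, fun σ _ _ h h' => toTabloid_pairClass_trans D.1 σ h h'⟩

/-- `𝒞(D)` is isomorphic to the row tabloid module `ℛ(δ(D))` as a `ℚ[S_{dn}]`-module:
there is a `ℚ`-linear equivalence intertwining the (diagonal) `S_{dn}`-actions. -/
theorem stmt7 (n d : ℕ) (hn : 0 < n) (hd : 0 < d) (D : CorrDiagram n d) :
    ∃ e : Cmod n d D ≃ₗ[ℚ] RowTabloidModule (d * n) (delta n d D.1),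
      ∀ (σ : Equiv.Perm (Fin (d * n))) (S T : Filling n d)
        (h : shapeOf n d (S, T) = D.1)
        (h' : shapeOf n d (S.trans σ, T.trans σ) = D.1),
        e ⟨(Submodule.Quotient.mk
              (Finsupp.single ((S.trans σ, T.trans σ) : Filling n d × Filling n d) (1 : ℚ))
              : Wspace n d),
            Submodule.subset_span ⟨(S.trans σ, T.trans σ), h', rfl⟩⟩ =
        Finsupp.mapDomain (permTabloid (d * n) (delta n d D.1) σ)
          (e ⟨(Submodule.Quotient.mk
                (Finsupp.single ((S, T) : Filling n d × Filling n d) (1 : ℚ))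
                : Wspace n d),
              Submodule.subset_span ⟨(S, T), h, rfl⟩⟩) :=
  stmt7_general n d D
end
end

section
/- Let (S,T) be a pair of fillings and let I ⊆ {1,…,dn} be a set of size n²+1 such that the map sending k ∈ I to the pair (row of k in S, row of k in T) is injective on I. Then the element Σ_σ sgn(σ)·(σ·S, σ·T) of 𝒫, where σ ranges over all permutations of {1,…,dn} that fix every element outside I, lies in ker(φ). -/
noncomputable section

open Finset

/-- Pairing cancellation: an alternating sum, over a set of permutations closed under
multiplication by transpositions of elements of `I`, of products `∏ₖ x (σ k) (p k)` vanishes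
as soon as `p` must take (by pigeonhole) the same value at two points of `I`. -/
lemma key_cancel {N : ℕ} (I : Finset (Fin N)) {P : Type*} [Fintype P] [DecidableEq P]
    (hc : Fintype.card P < I.card) (p : Fin N → P) (x : Fin N → P → ℚ)
    (F : Finset (Equiv.Perm (Fin N)))
    (hF2 : ∀ σ ∈ F, ∀ k₁ ∈ I, ∀ k₂ ∈ I, σ * Equiv.swap k₁ k₂ ∈ F) :
    ∑ σ ∈ F, ((Equiv.Perm.sign σ : ℤ) : ℚ) * ∏ k, x (σ k) (p k) = 0 := by
  obtain ⟨k₁, hk₁, k₂, hk₂, hne, hp⟩ :=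
    Finset.exists_ne_map_eq_of_card_lt_of_maps_to
      (t := (Finset.univ : Finset P)) (by simpa using hc)
      (fun a _ => Finset.mem_univ (p a))
  have hps : ∀ k, p (Equiv.swap k₁ k₂ k) = p k := by
    intro k
    rcases eq_or_ne k k₁ with rfl | h1
    · simp [Equiv.swap_apply_left, hp]
    rcases eq_or_ne k k₂ with rfl | h2
    · simp [Equiv.swap_apply_right, hp]
    · rw [Equiv.swap_apply_of_ne_of_ne h1 h2]
  refine Finset.sum_involution (fun σ _ => σ * Equiv.swap k₁ k₂) ?_ ?_ ?_ ?_
  · intro σ hσ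
    have hsign : ((Equiv.Perm.sign (σ * Equiv.swap k₁ k₂) : ℤ) : ℚ)
        = -((Equiv.Perm.sign σ : ℤ) : ℚ) := by
      rw [Equiv.Perm.sign_mul, Equiv.Perm.sign_swap hne]
      push_cast
      ring
    have hprod : ∏ k, x ((σ * Equiv.swap k₁ k₂) k) (p k) = ∏ k, x (σ k) (p k) := by
      calc ∏ k, x ((σ * Equiv.swap k₁ k₂) k) (p k)
          = ∏ k, x (σ (Equiv.swap k₁ k₂ k)) (p (Equiv.swap k₁ k₂ k)) := by
            simp [Equiv.Perm.mul_apply, hps]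
        _ = ∏ k, x (σ k) (p k) := Equiv.prod_comp (Equiv.swap k₁ k₂) (fun k => x (σ k) (p k))
    rw [hsign, hprod]; ring
  · intro σ hσ _
    intro h
    have hsw : Equiv.swap k₁ k₂ = 1 := mul_left_cancel (a := σ) (by rw [mul_one]; exact h)
    have : Equiv.swap k₁ k₂ k₁ = k₁ := by rw [hsw]; rfl
    rw [Equiv.swap_apply_left] at this
    exact hne this.symm
  · intro σ hσ
    exact hF2 σ hσ k₁ hk₁ k₂ hk₂
  · intro σ hσ
    show σ * Equiv.swap k₁ k₂ * Equiv.swap k₁ k₂ = σ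
    rw [mul_assoc, Equiv.swap_mul_self, mul_one]

/-- Expansion of a product of determinants over the rows of a filling into a sum over
tuples of permutations. -/
lemma half_expand (n d : ℕ) (A : Filling n d) (u : Fin (d * n) → Fin n → ℚ) :
    (∏ i : Fin d, (Matrix.of fun r c : Fin n => u (A (i, c)) r).det)
    = ∑ π : Fin d → Equiv.Perm (Fin n),
        (((∏ i, (Equiv.Perm.sign (π i) : ℤ)) : ℤ) : ℚ) *
        ∏ k, u k (π (A.symm k).1 (A.symm k).2) := by
  calc
    (∏ i : Fin d, (Matrix.of fun r c : Fin n => u (A (i, c)) r).det)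
      = ∏ i : Fin d, ∑ π : Equiv.Perm (Fin n),
          ((Equiv.Perm.sign π : ℤ) : ℚ) * ∏ c, u (A (i, c)) (π c) := by
        refine Finset.prod_congr rfl fun i _ => ?_
        rw [Matrix.det_apply']
        rfl
    _ = ∑ π : Fin d → Equiv.Perm (Fin n),
          ∏ i, (((Equiv.Perm.sign (π i) : ℤ)) : ℚ) * ∏ c, u (A (i, c)) (π i c) :=
        Fintype.prod_sum _
    _ = ∑ π : Fin d → Equiv.Perm (Fin n),
          (((∏ i, (Equiv.Perm.sign (π i) : ℤ)) : ℤ) : ℚ) *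
          ∏ i, ∏ c, u (A (i, c)) (π i c) := by
        refine Finset.sum_congr rfl fun π _ => ?_
        rw [Finset.prod_mul_distrib]
        push_cast
        ring
    _ = ∑ π : Fin d → Equiv.Perm (Fin n),
          (((∏ i, (Equiv.Perm.sign (π i) : ℤ)) : ℤ) : ℚ) *
          ∏ k, u k (π (A.symm k).1 (A.symm k).2) := by
        refine Finset.sum_congr rfl fun π _ => ?_
        congr 1
        calc (∏ i : Fin d, ∏ c : Fin n, u (A (i, c)) (π i c))
            = ∏ p : Fin d × Fin n, u (A p) (π p.1 p.2) :=
              (Fintype.prod_prod_type (f := fun p : Fin d × Fin n => u (A p) (π p.1 p.2))).symm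
          _ = ∏ p : Fin d × Fin n, u (A p) (π (A.symm (A p)).1 (A.symm (A p)).2) := by
              refine Finset.prod_congr rfl fun p _ => ?_
              simp
          _ = ∏ k, u k (π (A.symm k).1 (A.symm k).2) :=
              Equiv.prod_comp A (fun k => u k (π (A.symm k).1 (A.symm k).2))

open Classical in
/-- Let `I ⊆ {1,…,dn}` have size `n²+1` with the map `k ↦ (row of k in S, row of k in T)`
injective on `I`. Then `Σ_σ sgn(σ)·(σ·S, σ·T)`, summed over the permutations fixing
everything outside `I`, lies in `ker φ`. -/
theorem stmt9 (n d : ℕ) (hn : 0 < n) (hd : 0 < d) (S T : Filling n d)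
    (I : Finset (Fin (d * n))) (hcard : I.card = n ^ 2 + 1)
    (hinj : Set.InjOn (fun k : Fin (d * n) => ((S.symm k).1, (T.symm k).1))
      (I : Set (Fin (d * n)))) :
    (∑ σ ∈ Finset.univ.filter
        (fun σ : Equiv.Perm (Fin (d * n)) => ∀ k ∉ I, σ k = k),
      ((Equiv.Perm.sign σ : ℤ) : ℚ) •
        Finsupp.single ((S.trans σ, T.trans σ) : Filling n d × Filling n d) (1 : ℚ))
      ∈ LinearMap.ker (phi n d) := by
  classical
  rw [LinearMap.mem_ker, map_sum]
  have hphi : ∀ σ : Equiv.Perm (Fin (d * n)),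
      phi n d (((Equiv.Perm.sign σ : ℤ) : ℚ) •
        Finsupp.single ((S.trans σ, T.trans σ) : Filling n d × Filling n d) (1 : ℚ))
      = ((Equiv.Perm.sign σ : ℤ) : ℚ) • phiFun n d (S.trans σ, T.trans σ) := by
    intro σ
    rw [map_smul, phi, Finsupp.linearCombination_single, one_smul]
  rw [Finset.sum_congr rfl fun σ _ => hphi σ]
  ext vw
  rw [Finset.sum_apply]
  simp only [Pi.smul_apply, smul_eq_mul, Pi.zero_apply]
  -- Expand each `phiFun`.
  have hexp : ∀ σ : Equiv.Perm (Fin (d * n)),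
      ((Equiv.Perm.sign σ : ℤ) : ℚ) * phiFun n d (S.trans σ, T.trans σ) vw
      = ∑ π : Fin d → Equiv.Perm (Fin n), ∑ ρ : Fin d → Equiv.Perm (Fin n),
          ((((∏ i, (Equiv.Perm.sign (π i) : ℤ)) : ℤ) : ℚ) *
            (((∏ j, (Equiv.Perm.sign (ρ j) : ℤ)) : ℤ) : ℚ)) *
          (((Equiv.Perm.sign σ : ℤ) : ℚ) *
            ∏ k, ((vw (σ k)).1 (π (S.symm k).1 (S.symm k).2) *
                  (vw (σ k)).2 (ρ (T.symm k).1 (T.symm k).2))) := by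
    intro σ
    have h1 : (∏ i : Fin d, (Matrix.of fun r c : Fin n =>
          (vw ((S.trans σ) (i, c))).1 r).det)
        = ∑ π : Fin d → Equiv.Perm (Fin n),
            (((∏ i, (Equiv.Perm.sign (π i) : ℤ)) : ℤ) : ℚ) *
            ∏ k, (vw (σ k)).1 (π (S.symm k).1 (S.symm k).2) :=
      half_expand n d S (fun k => (vw (σ k)).1)
    have h2 : (∏ j : Fin d, (Matrix.of fun r c : Fin n =>
          (vw ((T.trans σ) (j, c))).2 r).det)
        = ∑ ρ : Fin d → Equiv.Perm (Fin n),
            (((∏ j, (Equiv.Perm.sign (ρ j) : ℤ)) : ℤ) : ℚ) *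
            ∏ k, (vw (σ k)).2 (ρ (T.symm k).1 (T.symm k).2) :=
      half_expand n d T (fun k => (vw (σ k)).2)
    calc ((Equiv.Perm.sign σ : ℤ) : ℚ) * phiFun n d (S.trans σ, T.trans σ) vw
        = ((Equiv.Perm.sign σ : ℤ) : ℚ) *
            ((∑ π : Fin d → Equiv.Perm (Fin n),
              (((∏ i, (Equiv.Perm.sign (π i) : ℤ)) : ℤ) : ℚ) *
              ∏ k, (vw (σ k)).1 (π (S.symm k).1 (S.symm k).2)) *
             (∑ ρ : Fin d → Equiv.Perm (Fin n),
              (((∏ j, (Equiv.Perm.sign (ρ j) : ℤ)) : ℤ) : ℚ) *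
              ∏ k, (vw (σ k)).2 (ρ (T.symm k).1 (T.symm k).2))) := by
          rw [phiFun, ← h1, ← h2]
      _ = _ := by
          rw [Finset.sum_mul_sum, Finset.mul_sum]
          refine Finset.sum_congr rfl fun π _ => ?_
          rw [Finset.mul_sum]
          refine Finset.sum_congr rfl fun ρ _ => ?_
          rw [Finset.prod_mul_distrib]
          ring
  rw [Finset.sum_congr rfl fun σ _ => hexp σ]
  rw [Finset.sum_comm]
  refine Finset.sum_eq_zero fun π _ => ?_
  rw [Finset.sum_comm]
  refine Finset.sum_eq_zero fun ρ _ => ?_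
  rw [← Finset.mul_sum]
  have hzero :
      ∑ σ ∈ Finset.univ.filter
          (fun σ : Equiv.Perm (Fin (d * n)) => ∀ k ∉ I, σ k = k),
        ((Equiv.Perm.sign σ : ℤ) : ℚ) *
          ∏ k, ((vw (σ k)).1 (π (S.symm k).1 (S.symm k).2) *
                (vw (σ k)).2 (ρ (T.symm k).1 (T.symm k).2)) = 0 := by
    have hc : Fintype.card (Fin n × Fin n) < I.card := by
      rw [hcard]
      simp [pow_two]
    refine key_cancel I hc
      (fun k => (π (S.symm k).1 (S.symm k).2, ρ (T.symm k).1 (T.symm k).2))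
      (fun k q => (vw k).1 q.1 * (vw k).2 q.2) _ ?_
    intro σ hσ k₁ hk₁ k₂ hk₂
    simp only [Finset.mem_filter, Finset.mem_univ, true_and] at hσ ⊢
    intro k hk
    have h1 : k ≠ k₁ := fun h => hk (h ▸ hk₁)
    have h2 : k ≠ k₂ := fun h => hk (h ▸ hk₂)
    rw [Equiv.Perm.mul_apply, Equiv.swap_apply_of_ne_of_ne h1 h2, hσ k hk]
  rw [hzero, mul_zero]
end
end

section
/- For every pair of fillings (S,T), the polynomial P(S,T) is a matrix semi-invariant: for every (A,C) ∈ SL(n,ℚ) × SL(n,ℚ), P(S,T) is fixed by the ℚ-algebra endomorphism of ℚ[x_{i,j}^{(k)} : k ∈ {1,…,dn}, i,j ∈ {1,…,n}] sending each variable x_{i,j}^{(k)} to the (i,j) entry of A·X_k·C⁻¹. -/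
/-!
`P(S,T)` is the mixed determinant `Σ_σ det [column q of Y_{σ(q)}]_q` of the block matrices
`Y_k = E_{r(k) c(k)} ⊗ X_k`, and the substitution replaces every `Y_k` by
`(1 ⊗ A) Y_k (1 ⊗ C⁻¹)`. A common left factor multiplies every term by its determinant. For a
common right factor `B`, the form `w ↦ Σ_σ det [Y_{σ(q)} w_q]_q` on tuples of vectors is
alternating, being (after reindexing `σ`) the alternatization of `w ↦ det [Y_q w_q]_q`; so its
value at the columns of `B` is `det B` times its value at the standard basis. Both factors have
determinant `1`.
-/

noncomputable section

/-- The polynomial ring `ℚ[x_{i,j}^{(k)} : k ∈ {1,…,dn}, i,j ∈ {1,…,n}]`. -/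
abbrev PolyRing (n d : ℕ) := MvPolynomial (Fin (d * n) × Fin n × Fin n) ℚ

/-- The `dn × dn` matrix `Y_k`, a `d × d` array of `n × n` blocks whose only nonzero
block is `X_k`, placed at position (row of `k` in `S`, row of `k` in `T`). -/
def Ymat (n d : ℕ) (ST : Filling n d × Filling n d) (k : Fin (d * n)) :
    Matrix (Fin d × Fin n) (Fin d × Fin n) (PolyRing n d) :=
  Matrix.of fun p q =>
    if p.1 = (ST.1.symm k).1 ∧ q.1 = (ST.2.symm k).1 then MvPolynomial.X (k, p.2, q.2)
    else 0

/-- The mixed-discriminant polynomial `P(S,T) = Σ_{σ ∈ S_{dn}} det(Z_σ)`, where the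
`ℓ`-th column of `Z_σ` is the `ℓ`-th column of `Y_{σ(ℓ)}`. -/
def Ppoly (n d : ℕ) (ST : Filling n d × Filling n d) : PolyRing n d :=
  ∑ σ : Equiv.Perm (Fin (d * n)),
    (Matrix.of fun p q : Fin d × Fin n =>
      Ymat n d ST (σ (finProdFinEquiv q)) p q).det

/-- The `n × n` matrix of variables `X_k = (x_{i,j}^{(k)})`. -/
def Xmat (n d : ℕ) (k : Fin (d * n)) : Matrix (Fin n) (Fin n) (PolyRing n d) :=
  Matrix.of fun i j => MvPolynomial.X (k, i, j)

open Matrix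

open scoped Kronecker

namespace Matrix

variable {R : Type*} [CommRing R] {N ι : Type*} [Fintype N] [Fintype ι] [DecidableEq N]
  [DecidableEq ι]

def mixedDet (e : ι ≃ N) (Y : N → Matrix ι ι R) : R :=
  ∑ σ : Equiv.Perm N, (of fun p q => Y (σ (e q)) p q).det

theorem _root_.RingHom.map_mixedDet {S : Type*} [CommRing S] (f : R →+* S) (e : ι ≃ N)
    (Y : N → Matrix ι ι R) : f (mixedDet e Y) = mixedDet e fun k => (Y k).map f := by
  simp only [mixedDet, map_sum, f.map_det]
  rfl

theorem mixedDet_mul_left (e : ι ≃ N) (A : Matrix ι ι R) (Y : N → Matrix ι ι R) :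
    mixedDet e (fun k => A * Y k) = A.det * mixedDet e Y := by
  simp only [mixedDet, Finset.mul_sum, ← det_mul]
  congr! 2 with σ

def mixedDetForm (e : ι ≃ N) (Y : N → Matrix ι ι R) : (ι → R) [⋀^ι]→ₗ[R] R :=
  MultilinearMap.alternatization
    ((detRowAlternating : (ι → R) [⋀^ι]→ₗ[R] R).toMultilinearMap.compLinearMap
      fun q => (Y (e q)).mulVecLin)

theorem mixedDetForm_apply (e : ι ≃ N) (Y : N → Matrix ι ι R) (w : ι → ι → R) :
    mixedDetForm e Y w = ∑ σ : Equiv.Perm N, (of fun p q => (Y (σ (e q)) *ᵥ w q) p).det := by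
  rw [mixedDetForm, MultilinearMap.alternatization_apply]
  refine Fintype.sum_equiv ((Equiv.inv _).trans e.permCongr) _ _ fun π => ?_
  set v : ι → ι → R := fun q => Y (e (π⁻¹ q)) *ᵥ w q
  have hv : (fun q => Y (e q) *ᵥ w (π q)) = v ∘ π := by
    funext q
    simp [v]
  simp only [MultilinearMap.domDomCongr_apply, MultilinearMap.compLinearMap_apply,
    mulVecLin_apply, AlternatingMap.coe_multilinearMap, hv, AlternatingMap.map_perm, smul_smul,
    Int.units_mul_self, one_smul, Equiv.trans_apply, Equiv.inv_apply, Equiv.permCongr_apply,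
    Equiv.symm_apply_apply]
  rw [← det_transpose]
  rfl

theorem mixedDet_mul_eq_mixedDetForm (e : ι ≃ N) (Y : N → Matrix ι ι R) (B : Matrix ι ι R) :
    mixedDet e (fun k => Y k * B) = mixedDetForm e Y B.col := by
  rw [mixedDetForm_apply]
  rfl

theorem mixedDet_eq_mixedDetForm_basisFun (e : ι ≃ N) (Y : N → Matrix ι ι R) :
    mixedDet e Y = mixedDetForm e Y (Pi.basisFun R ι) := by
  convert mixedDet_mul_eq_mixedDetForm e Y 1 using 2
  · simp
  · ext q p
    simp [one_apply, Pi.single_apply, eq_comm]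

theorem mixedDet_mul_right (e : ι ≃ N) (Y : N → Matrix ι ι R) (B : Matrix ι ι R) :
    mixedDet e (fun k => Y k * B) = B.det * mixedDet e Y := by
  have h := DFunLike.congr_fun
    (AlternatingMap.eq_smul_basis_det (Pi.basisFun R ι) (mixedDetForm e Y)) B.col
  rw [mixedDet_mul_eq_mixedDetForm, mixedDet_eq_mixedDetForm_basisFun, h,
    AlternatingMap.smul_apply, Pi.basisFun_det, smul_eq_mul, mul_comm]
  exact congrArg (· * _) (det_transpose B)

end Matrix

theorem Matrix.SpecialLinearGroup.det_one_kronecker_map {m n R S : Type*} [Fintype m]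
    [Fintype n] [DecidableEq m] [DecidableEq n] [CommRing R] [CommRing S] (f : R →+* S)
    (A : SpecialLinearGroup n R) :
    ((1 : Matrix m m S) ⊗ₖ (A : Matrix n n R).map f).det = 1 := by
  rw [det_kronecker, det_one, one_pow, one_mul, ← RingHom.mapMatrix_apply, ← RingHom.map_det,
    A.det_coe, map_one, one_pow]

theorem Ppoly_eq_mixedDet (n d : ℕ) (ST : Filling n d × Filling n d) :
    Ppoly n d ST = mixedDet finProdFinEquiv (Ymat n d ST) :=
  rfl

theorem Ymat_eq_kronecker (n d : ℕ) (ST : Filling n d × Filling n d) (k : Fin (d * n)) :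
    Ymat n d ST k = single (ST.1.symm k).1 (ST.2.symm k).1 1 ⊗ₖ Xmat n d k := by
  ext ⟨p₁, p₂⟩ ⟨q₁, q₂⟩ : 1
  simp [Ymat, Xmat, single_apply, kroneckerMap_apply, eq_comm]

theorem Ymat_map_aeval (n d : ℕ) (ST : Filling n d × Filling n d)
    (A C : Matrix (Fin n) (Fin n) (PolyRing n d)) (k : Fin (d * n)) :
    (Ymat n d ST k).map (MvPolynomial.aeval fun p : Fin (d * n) × Fin n × Fin n =>
        (A * Xmat n d p.1 * C) p.2.1 p.2.2) =
      ((1 : Matrix (Fin d) (Fin d) (PolyRing n d)) ⊗ₖ A) * Ymat n d ST k *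
        ((1 : Matrix (Fin d) (Fin d) (PolyRing n d)) ⊗ₖ C) := by
  rw [Ymat_eq_kronecker, ← mul_kronecker_mul, ← mul_kronecker_mul, one_mul, mul_one]
  ext ⟨p₁, p₂⟩ ⟨q₁, q₂⟩ : 1
  simp only [map_apply, kroneckerMap_apply, single_apply]
  split_ifs <;> simp [Xmat]

theorem stmt10_general (n d : ℕ) (ST : Filling n d × Filling n d)
    (A C : Matrix.SpecialLinearGroup (Fin n) ℚ) :
    MvPolynomial.aeval (fun p : Fin (d * n) × Fin n × Fin n =>
      ((((A : Matrix (Fin n) (Fin n) ℚ).map (MvPolynomial.C) * Xmat n d p.1 *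
        ((C⁻¹ : Matrix.SpecialLinearGroup (Fin n) ℚ) : Matrix (Fin n) (Fin n) ℚ).map
          (MvPolynomial.C)) :
        Matrix (Fin n) (Fin n) (PolyRing n d)) p.2.1 p.2.2)) (Ppoly n d ST)
      = Ppoly n d ST := by
  rw [Ppoly_eq_mixedDet, ← AlgHom.coe_toRingHom, RingHom.map_mixedDet]
  simp only [AlgHom.coe_toRingHom, Ymat_map_aeval]
  rw [mixedDet_mul_right, mixedDet_mul_left, SpecialLinearGroup.det_one_kronecker_map,
    SpecialLinearGroup.det_one_kronecker_map, one_mul, one_mul]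

/-- `P(S,T)` is a matrix semi-invariant: it is fixed by the substitution
`x_{i,j}^{(k)} ↦ (A · X_k · C⁻¹)_{i,j}` for every `(A,C) ∈ SL(n,ℚ) × SL(n,ℚ)`. -/
theorem stmt10 (n d : ℕ) (hn : 0 < n) (hd : 0 < d) (ST : Filling n d × Filling n d)
    (A C : Matrix.SpecialLinearGroup (Fin n) ℚ) :
    MvPolynomial.aeval (fun p : Fin (d * n) × Fin n × Fin n =>
      ((((A : Matrix (Fin n) (Fin n) ℚ).map (MvPolynomial.C) * Xmat n d p.1 *
        ((C⁻¹ : Matrix.SpecialLinearGroup (Fin n) ℚ) : Matrix (Fin n) (Fin n) ℚ).map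
          (MvPolynomial.C)) :
        Matrix (Fin n) (Fin n) (PolyRing n d)) p.2.1 p.2.2)) (Ppoly n d ST)
      = Ppoly n d ST :=
  stmt10_general n d ST A C
end
end

section
/- For all positive integers n and d, (n!)^{2d} multiplied by the number of disconnected (d,n)-correlated tableaux is at most Σ_{k=1}^{d−1} binom(d,k)² · binom(dn,kn) · ((kn)!)² · (((d−k)n)!)². -/
noncomputable section

/-- A `(d,n)`-correlated tableau: a `d × d` array of pairwise disjoint subsets of
`{1,…,dn}` with union everything, such that each row union and each column union has
exactly `n` elements. -/
def CorrTableau (n d : ℕ) :=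
  {C : Fin d × Fin d → Finset (Fin (d * n)) //
    (∀ p q, p ≠ q → Disjoint (C p) (C q)) ∧
    (∀ x, ∃ p, x ∈ C p) ∧
    (∀ i : Fin d, (Finset.univ.biUnion (fun j => C (i, j))).card = n) ∧
    (∀ j : Fin d, (Finset.univ.biUnion (fun i => C (i, j))).card = n)}

/-- The bipartite graph of a correlated tableau: left vertex `i` adjacent to right
vertex `j` iff `C(i,j) ≠ ∅`. -/
def ctGraph (n d : ℕ) (C : CorrTableau n d) : SimpleGraph (Fin d ⊕ Fin d) :=
  SimpleGraph.fromRel (fun a b => ∃ i j : Fin d, a = Sum.inl i ∧ b = Sum.inr j ∧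
    (C.1 (i, j)).Nonempty)

/-!
A correlated tableau is the same as the pair of maps sending `x` to its row and to its column,
`Fin (d * n) → Fin d`, all of whose fibres have `n` elements. Labelling every row fibre and
every column fibre by `Fin n` (`n! ^ (2 * d)` choices) turns the pair into a pair of bijections
`e, f : Fin (d * n) ≃ Fin d × Fin n`, injectively. If the graph is disconnected, the rows `S` and
columns `T` reachable from one vertex satisfy `row x ∈ S ↔ col x ∈ T`, and counting fibres gives
`#S = #T = k` with `0 < k < d`. For fixed `S, T` the pairs `(e, f)` with
`e⁻¹ (S × Fin n) = f⁻¹ (T × Fin n)` are counted via `(e, f ∘ e⁻¹)`, where `f ∘ e⁻¹` is a permutation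
mapping `S × Fin n` onto `T × Fin n`: there are
`(dn)! · (kn)! · ((d - k) n)!` of them. Summing over `k` and the `(d choose k) ^ 2` pairs `S, T`
gives the bound.
-/

open Finset Nat

section EquivCount

variable {X Y : Type*} [Finite X] [Finite Y]

lemma Nat.card_equiv_of_card_eq (h : Nat.card X = Nat.card Y) :
    Nat.card (X ≃ Y) = (Nat.card X)! := by
  classical
  have := Fintype.ofFinite X
  have := Fintype.ofFinite Y
  simp only [Nat.card_eq_fintype_card] at h ⊢
  exact Fintype.card_equiv (Fintype.equivOfCardEq h)

lemma Nat.card_subtype_not_congr (p q : Y → Prop)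
    (h : Nat.card {y // p y} = Nat.card {y // q y}) :
    Nat.card {y // ¬ p y} = Nat.card {y // ¬ q y} := by
  classical
  have := Fintype.ofFinite Y
  simp only [Nat.card_eq_fintype_card, Fintype.card_subtype_compl] at h ⊢
  rw [h]

lemma card_perm_mapsTo_le (p q : Y → Prop) (h : Nat.card {y // p y} = Nat.card {y // q y}) :
    Nat.card {g : Equiv.Perm Y // ∀ y, p y ↔ q (g y)} ≤
      (Nat.card {y // p y})! * (Nat.card {y // ¬ p y})! := by
  let restrict (g : {g : Equiv.Perm Y // ∀ y, p y ↔ q (g y)}) :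
      ({y // p y} ≃ {y // q y}) × ({y // ¬ p y} ≃ {y // ¬ q y}) :=
    (g.1.subtypeEquiv g.2, g.1.subtypeEquiv fun y => not_congr (g.2 y))
  have restrict_injective : Function.Injective restrict := by
    rintro ⟨g, hg⟩ ⟨g', hg'⟩ hgg'
    refine Subtype.ext (Equiv.ext fun y => ?_)
    by_cases hy : p y
    · exact congrArg (fun e => (e.1 ⟨y, hy⟩ : Y)) hgg'
    · exact congrArg (fun e => (e.2 ⟨y, hy⟩ : Y)) hgg'
  calc _ ≤ _ := Nat.card_le_card_of_injective restrict restrict_injective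
    _ = _ := by
      rw [Nat.card_prod, Nat.card_equiv_of_card_eq h,
        Nat.card_equiv_of_card_eq (Nat.card_subtype_not_congr p q h)]

lemma card_equiv_pairs_le (p q : Y → Prop) (h : Nat.card {y // p y} = Nat.card {y // q y}) :
    Nat.card {ef : (X ≃ Y) × (X ≃ Y) // ∀ x, p (ef.1 x) ↔ q (ef.2 x)} ≤
      Nat.card (X ≃ Y) * ((Nat.card {y // p y})! * (Nat.card {y // ¬ p y})!) := by
  let toPerm (ef : {ef : (X ≃ Y) × (X ≃ Y) // ∀ x, p (ef.1 x) ↔ q (ef.2 x)}) :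
      (X ≃ Y) × {g : Equiv.Perm Y // ∀ y, p y ↔ q (g y)} :=
    (ef.1.1, ⟨ef.1.1.symm.trans ef.1.2, fun y => by simpa using ef.2 (ef.1.1.symm y)⟩)
  have toPerm_injective : Function.Injective toPerm := by
    rintro ⟨⟨e, f⟩, _⟩ ⟨⟨e', f'⟩, _⟩ h
    simp only [toPerm, Prod.mk.injEq, Subtype.mk.injEq] at h
    obtain ⟨rfl, hf⟩ := h
    simp only [Subtype.mk.injEq, Prod.mk.injEq, true_and]
    ext x
    simpa using Equiv.congr_fun hf (e x)
  calc _ ≤ _ := Nat.card_le_card_of_injective toPerm toPerm_injective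
    _ ≤ _ := by
      rw [Nat.card_prod]
      exact Nat.mul_le_mul_left _ (card_perm_mapsTo_le p q h)

lemma Nat.card_subtype_fst_mem {I : Type*} (S : Finset I) (J : Type*) [Finite J] :
    Nat.card {y : I × J // y.1 ∈ S} = #S * Nat.card J := by
  rw [Nat.card_congr Equiv.prodSubtypeFstEquivSubtypeProd, Nat.card_prod]
  simp

lemma card_equiv_pairs_fst_mem_le {n d k : ℕ} {S T : Finset (Fin d)} (hS : #S = k)
    (hT : #T = k) :
    Nat.card {ef : (Fin (d * n) ≃ Fin d × Fin n) × (Fin (d * n) ≃ Fin d × Fin n) //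
        ∀ x, (ef.1 x).1 ∈ S ↔ (ef.2 x).1 ∈ T} ≤
      (d * n).choose (k * n) * (k * n)! ^ 2 * ((d - k) * n)! ^ 2 := by
  have hk : k ≤ d := by simpa [hS] using card_le_univ S
  have hS_card : Nat.card {y : Fin d × Fin n // y.1 ∈ S} = k * n := by
    rw [Nat.card_subtype_fst_mem, hS, Nat.card_fin]
  have hSc_card : Nat.card {y : Fin d × Fin n // y.1 ∉ S} = (d - k) * n := by
    simp_rw [← Finset.mem_compl]
    rw [Nat.card_subtype_fst_mem, card_compl, hS, Fintype.card_fin, Nat.card_fin]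
  have hT_card : Nat.card {y : Fin d × Fin n // y.1 ∈ T} = k * n := by
    rw [Nat.card_subtype_fst_mem, hT, Nat.card_fin]
  calc _ ≤ (d * n)! * ((k * n)! * ((d - k) * n)!) := by
        have := card_equiv_pairs_le (X := Fin (d * n)) (fun y : Fin d × Fin n => y.1 ∈ S)
          (fun y => y.1 ∈ T) (hS_card.trans hT_card.symm)
        rwa [hS_card, hSc_card, Nat.card_equiv_of_card_eq (by simp), Nat.card_fin] at this
    _ = (d * n).choose (k * n) * (k * n)! ^ 2 * ((d - k) * n)! ^ 2 := by
        rw [← Nat.choose_mul_factorial_mul_factorial (Nat.mul_le_mul_right n hk), ← Nat.sub_mul]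
        ring

end EquivCount

section Fiberwise

variable {X I : Type*} [Finite X] {n : ℕ}

def fiberEquiv (r : X → I) (hr : ∀ i, Nat.card {x // r x = i} = n) : X ≃ I × Fin n :=
  (Equiv.sigmaFiberEquiv r).symm.trans
    ((Equiv.sigmaCongrRight fun i => Finite.equivFinOfCardEq (hr i)).trans
      (Equiv.sigmaEquivProd I (Fin n)))

lemma eq_of_fiberEquiv_trans_prodShear_eq {r r' : X → I}
    {hr : ∀ i, Nat.card {x // r x = i} = n} {hr' : ∀ i, Nat.card {x // r' x = i} = n}
    {σ σ' : I → Equiv.Perm (Fin n)}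
    (h : (fiberEquiv r hr).trans ((Equiv.refl I).prodShear σ) =
      (fiberEquiv r' hr').trans ((Equiv.refl I).prodShear σ')) :
    r = r' ∧ σ = σ' := by
  obtain rfl : r = r' := funext fun x => congrArg Prod.fst (Equiv.congr_fun h x)
  refine ⟨rfl, funext fun i => Equiv.ext fun m => ?_⟩
  simpa using Equiv.congr_fun h ((fiberEquiv r hr).symm (i, m))

lemma card_subtype_mem_of_card_fiber (r : X → I) (hr : ∀ i, Nat.card {x // r x = i} = n)
    (S : Finset I) : Nat.card {x // r x ∈ S} = #S * n := by
  calc Nat.card {x // r x ∈ S} = Nat.card {y : I × Fin n // y.1 ∈ S} :=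
        Nat.card_congr ((fiberEquiv r hr).subtypeEquiv fun _ => Iff.rfl)
    _ = #S * n := by rw [Nat.card_subtype_fst_mem, Nat.card_fin]

end Fiberwise

namespace CorrTableau

variable {n d : ℕ}

instance : Finite (CorrTableau n d) := by unfold CorrTableau; infer_instance

def cell (C : CorrTableau n d) (x : Fin (d * n)) : Fin d × Fin d := (C.2.2.1 x).choose

lemma mem_iff_cell_eq (C : CorrTableau n d) {x : Fin (d * n)} {p : Fin d × Fin d} :
    x ∈ C.1 p ↔ C.cell x = p := by
  refine ⟨fun hx => ?_, fun h => h ▸ (C.2.2.1 x).choose_spec⟩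
  by_contra hne
  exact Finset.disjoint_left.mp (C.2.1 _ _ hne) (C.2.2.1 x).choose_spec hx

lemma cell_injective : Function.Injective (cell : CorrTableau n d → _) := by
  intro C C' h
  refine Subtype.ext (funext fun p => Finset.ext fun x => ?_)
  rw [mem_iff_cell_eq, mem_iff_cell_eq, h]

lemma card_row_fiber (C : CorrTableau n d) (i : Fin d) :
    Nat.card {x // (C.cell x).1 = i} = n := by
  rw [Nat.card_eq_fintype_card, Fintype.card_subtype]
  convert C.2.2.2.1 i using 2
  ext x
  simp [mem_iff_cell_eq, Prod.ext_iff]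

lemma card_col_fiber (C : CorrTableau n d) (j : Fin d) :
    Nat.card {x // (C.cell x).2 = j} = n := by
  rw [Nat.card_eq_fintype_card, Fintype.card_subtype]
  convert C.2.2.2.2 j using 2
  ext x
  simp [mem_iff_cell_eq, Prod.ext_iff]

def rowEquiv (C : CorrTableau n d) : Fin (d * n) ≃ Fin d × Fin n :=
  fiberEquiv (fun x => (C.cell x).1) C.card_row_fiber

def colEquiv (C : CorrTableau n d) : Fin (d * n) ≃ Fin d × Fin n :=
  fiberEquiv (fun x => (C.cell x).2) C.card_col_fiber

def IsBlockDiagonal (C : CorrTableau n d) (S T : Finset (Fin d)) : Prop :=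
  ∀ x, (C.cell x).1 ∈ S ↔ (C.cell x).2 ∈ T

lemma IsBlockDiagonal.card_eq (hn : 0 < n) {C : CorrTableau n d} {S T : Finset (Fin d)}
    (h : C.IsBlockDiagonal S T) : #S = #T := by
  have hcard := card_subtype_mem_of_card_fiber _ C.card_row_fiber S
  rw [Nat.card_congr (Equiv.subtypeEquivRight h),
    card_subtype_mem_of_card_fiber _ C.card_col_fiber T] at hcard
  exact (Nat.eq_of_mul_eq_mul_right hn hcard).symm

def labelledEquivs (C : CorrTableau n d) (σ τ : Fin d → Equiv.Perm (Fin n)) :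
    (Fin (d * n) ≃ Fin d × Fin n) × (Fin (d * n) ≃ Fin d × Fin n) :=
  (C.rowEquiv.trans ((Equiv.refl _).prodShear σ), C.colEquiv.trans ((Equiv.refl _).prodShear τ))

lemma eq_of_labelledEquivs_eq {C C' : CorrTableau n d}
    {σ τ σ' τ' : Fin d → Equiv.Perm (Fin n)}
    (h : C.labelledEquivs σ τ = C'.labelledEquivs σ' τ') : C = C' ∧ σ = σ' ∧ τ = τ' := by
  simp only [labelledEquivs, Prod.mk.injEq] at h
  obtain ⟨hrow, rfl⟩ := eq_of_fiberEquiv_trans_prodShear_eq h.1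
  obtain ⟨hcol, rfl⟩ := eq_of_fiberEquiv_trans_prodShear_eq h.2
  obtain rfl : C = C' :=
    cell_injective (funext fun x => Prod.ext (congrFun hrow x) (congrFun hcol x))
  exact ⟨rfl, rfl, rfl⟩

lemma factorial_pow_mul_card_isBlockDiagonal_le_card (S T : Finset (Fin d)) :
    n ! ^ (2 * d) * Nat.card {C : CorrTableau n d // C.IsBlockDiagonal S T} ≤
      Nat.card {ef : (Fin (d * n) ≃ Fin d × Fin n) × (Fin (d * n) ≃ Fin d × Fin n) //
        ∀ x, (ef.1 x).1 ∈ S ↔ (ef.2 x).1 ∈ T} := by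
  let encode (z : {C : CorrTableau n d // C.IsBlockDiagonal S T} ×
      (Fin d → Equiv.Perm (Fin n)) × (Fin d → Equiv.Perm (Fin n))) :
      {ef : (Fin (d * n) ≃ Fin d × Fin n) × (Fin (d * n) ≃ Fin d × Fin n) //
        ∀ x, (ef.1 x).1 ∈ S ↔ (ef.2 x).1 ∈ T} :=
    ⟨z.1.1.labelledEquivs z.2.1 z.2.2, z.1.2⟩
  have encode_injective : Function.Injective encode := by
    rintro ⟨⟨C, hC⟩, σ, τ⟩ ⟨⟨C', hC'⟩, σ', τ'⟩ h
    obtain ⟨rfl, rfl, rfl⟩ := eq_of_labelledEquivs_eq (Subtype.ext_iff.mp h)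
    rfl
  calc n ! ^ (2 * d) * Nat.card {C : CorrTableau n d // C.IsBlockDiagonal S T}
      = Nat.card ({C : CorrTableau n d // C.IsBlockDiagonal S T} ×
          (Fin d → Equiv.Perm (Fin n)) × (Fin d → Equiv.Perm (Fin n))) := by
        simp only [pow_mul', card_prod, card_eq_fintype_card, Fintype.card_prod, Fintype.card_pi,
          Fintype.card_perm, Fintype.card_fin, prod_const, Finset.card_univ]
        ring
    _ ≤ _ := Nat.card_le_card_of_injective encode encode_injective

lemma ctGraph_adj_cell (C : CorrTableau n d) (x : Fin (d * n)) :
    (ctGraph n d C).Adj (.inl (C.cell x).1) (.inr (C.cell x).2) := by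
  rw [ctGraph, SimpleGraph.fromRel_adj]
  exact ⟨by simp, .inl ⟨_, _, rfl, rfl, x, C.mem_iff_cell_eq.mpr rfl⟩⟩

open scoped Classical in
lemma isBlockDiagonal_reachable (C : CorrTableau n d) (u : Fin d ⊕ Fin d) :
    C.IsBlockDiagonal {i | (ctGraph n d C).Reachable u (.inl i)}
      {j | (ctGraph n d C).Reachable u (.inr j)} := fun x => by
  simp only [mem_filter, mem_univ, true_and]
  exact ⟨fun h => h.trans (C.ctGraph_adj_cell x).reachable,
    fun h => h.trans (C.ctGraph_adj_cell x).symm.reachable⟩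

theorem exists_isBlockDiagonal_of_not_connected (hn : 0 < n) (hd : 0 < d)
    {C : CorrTableau n d} (h : ¬ (ctGraph n d C).Connected) :
    ∃ S T : Finset (Fin d), #S = #T ∧ #S ∈ Icc 1 (d - 1) ∧ C.IsBlockDiagonal S T := by
  classical
  obtain ⟨u, v, huv⟩ : ∃ u v, ¬ (ctGraph n d C).Reachable u v := by
    by_contra! hreach
    exact h ((SimpleGraph.connected_iff _).mpr ⟨hreach, ⟨.inl ⟨0, hd⟩⟩⟩)
  have hC := C.isBlockDiagonal_reachable u
  set S : Finset (Fin d) := {i | (ctGraph n d C).Reachable u (.inl i)}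
  set T : Finset (Fin d) := {j | (ctGraph n d C).Reachable u (.inr j)}
  have hST := hC.card_eq hn
  refine ⟨S, T, hST, mem_Icc.mpr ⟨?_, Nat.le_sub_one_of_lt ?_⟩, hC⟩
  · rcases u with i | j
    · exact card_pos.mpr ⟨i, by simp [S]⟩
    · exact hST ▸ card_pos.mpr ⟨j, by simp [T]⟩
  · rcases v with i | j
    · simpa using card_lt_univ_of_notMem (s := S) (x := i) (by simpa [S] using huv)
    · simpa [hST] using card_lt_univ_of_notMem (s := T) (x := j) (by simpa [T] using huv)

end CorrTableau

/-- Upper bound on the number of disconnected `(d,n)`-correlated tableaux. -/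
theorem stmt12 (n d : ℕ) (hn : 0 < n) (hd : 0 < d) :
    (n.factorial) ^ (2 * d) *
      Nat.card {C : CorrTableau n d // ¬ (ctGraph n d C).Connected} ≤
    ∑ k ∈ Finset.Icc 1 (d - 1), (d.choose k) ^ 2 * ((d * n).choose (k * n)) *
      ((k * n).factorial) ^ 2 * (((d - k) * n).factorial) ^ 2 := by
  classical
  have := Fintype.ofFinite (CorrTableau n d)
  let blocks (k : ℕ) : Finset (Finset (Fin d) × Finset (Fin d)) :=
    powersetCard k univ ×ˢ powersetCard k univ
  have cover : ({C | ¬ (ctGraph n d C).Connected} : Finset (CorrTableau n d)) ⊆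
      (Icc 1 (d - 1)).biUnion fun k =>
        (blocks k).biUnion fun ST => {C | C.IsBlockDiagonal ST.1 ST.2} := by
    intro C hC
    obtain ⟨S, T, hST, hk, hC⟩ :=
      CorrTableau.exists_isBlockDiagonal_of_not_connected hn hd (mem_filter.mp hC).2
    simp only [mem_biUnion]
    exact ⟨#S, hk, (S, T), by simp [blocks, hST], by simpa using hC⟩
  calc n ! ^ (2 * d) * Nat.card {C : CorrTableau n d // ¬ (ctGraph n d C).Connected}
      ≤ ∑ k ∈ Icc 1 (d - 1), ∑ ST ∈ blocks k,
          n ! ^ (2 * d) * Nat.card {C : CorrTableau n d // C.IsBlockDiagonal ST.1 ST.2} := by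
        simp only [← mul_sum, Nat.card_eq_fintype_card, Fintype.card_subtype]
        gcongr
        exact (card_le_card cover).trans
          (card_biUnion_le.trans (sum_le_sum fun k _ => card_biUnion_le))
    _ ≤ ∑ k ∈ Icc 1 (d - 1), ∑ ST ∈ blocks k,
          (d * n).choose (k * n) * (k * n)! ^ 2 * ((d - k) * n)! ^ 2 :=
        sum_le_sum fun k _ => sum_le_sum fun ST hST => by
          simp only [blocks, mem_product, mem_powersetCard_univ] at hST
          exact (CorrTableau.factorial_pow_mul_card_isBlockDiagonal_le_card ST.1 ST.2).trans
            (card_equiv_pairs_fst_mem_le hST.1 hST.2)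
    _ = _ := sum_congr rfl fun k _ => by
      simp only [blocks, sum_const, card_product, card_powersetCard, Finset.card_univ,
        Fintype.card_fin, smul_eq_mul]
      ring
end
end

section
/- There exists N ∈ ℕ such that for all integers n ≥ N and all integers d with 2 ≤ d and 4d² ≤ n: ∏_{i=1}^{n} ((d−1)·n + i) > n^n · 4^d · (n+d−1)^{d(d−1)}. -/
open Finset

lemma pow4_le_two_pow : ∀ t : ℕ, 17 ≤ t → (t+1)^4 ≤ 2^t := by
  intro t ht
  induction t, ht using Nat.le_induction with
  | base => norm_num
  | succ t ht ih =>
    obtain ⟨u, rfl⟩ : ∃ u, t = u + 17 := ⟨t - 17, by omega⟩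
    have h2 : (u+17+1+1)^4 ≤ 2*(u+17+1)^4 := by nlinarith [sq_nonneg u, sq_nonneg (u+1)]
    calc (u+17+1+1)^4 ≤ 2*(u+17+1)^4 := h2
      _ ≤ 2*2^(u+17) := by omega
      _ = 2^(u+17+1) := by ring

lemma core (n e : ℕ) (hn : 83521 ≤ n) (hdn : 4*(e+2)^2 ≤ n) :
    16^(e+2) * (n+e+1)^(2*((e+2)*(e+1))) < ((e+2)*(e+1))^n := by
  set k := (e+2)*(e+1) with hk
  have hk2 : 2 ≤ k := by calc 2 = 2*1 := rfl
                           _ ≤ (e+2)*(e+1) := Nat.mul_le_mul (by omega) (by omega)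
  have hde : e + 2 ≤ k := by
    calc e + 2 = (e+2)*1 := by ring
      _ ≤ (e+2)*(e+1) := Nat.mul_le_mul_left _ (by omega)
  have hkn : 4*(e+2) + 4*k = 4*(e+2)^2 := by rw [hk]; ring
  clear_value k
  by_cases hA : 2*n ≤ k^2
  · -- case A : n is small compared to k²
    have he1 : 1 ≤ e := by
      rcases Nat.eq_zero_or_pos e with rfl | h
      · exfalso
        norm_num at hk
        rw [hk] at hA
        norm_num at hA
        omega
      · exact h
    have hk6 : 6 ≤ k := by
      rw [hk]
      calc 6 = 3*2 := rfl
        _ ≤ (e+2)*(e+1) := Nat.mul_le_mul (by omega) (by omega)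
    have h16 : 16 < k^4 := by
      calc 16 < 6^4 := by norm_num
        _ ≤ k^4 := Nat.pow_le_pow_left hk6 4
    calc 16^(e+2) * (n+e+1)^(2*k)
        ≤ 16^(e+2) * (k^2)^(2*k) := by
          apply Nat.mul_le_mul_left
          exact Nat.pow_le_pow_left (by omega) _
      _ < (k^4)^(e+2) * (k^2)^(2*k) := by
          apply (Nat.mul_lt_mul_right (by positivity)).mpr
          exact Nat.pow_lt_pow_left h16 (by omega)
      _ = k^(4*(e+2) + 2*(2*k)) := by rw [← pow_mul, ← pow_mul, ← pow_add]
      _ ≤ k^n := Nat.pow_le_pow_right (by omega) (by omega)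
  · -- case B : k² < 2n
    push_neg at hA
    set m := 2*n with hm
    set s := Nat.sqrt m with hs
    set t := Nat.sqrt s with htdef
    have hks : k ≤ s := by
      apply Nat.le_sqrt.mpr
      have : k * k = k^2 := by ring
      omega
    have hs289 : 289 ≤ s := Nat.le_sqrt.mpr (by omega)
    have ht17 : 17 ≤ t := Nat.le_sqrt.mpr (by omega)
    have hst : s^2 ≤ m := Nat.sqrt_le' m
    have htt : t^2 ≤ s := Nat.sqrt_le' s
    have hm2t : m < 2^t := by
      have h1 : m < (s+1)^2 := Nat.lt_succ_sqrt' m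
      have h2 : s < (t+1)^2 := Nat.lt_succ_sqrt' s
      have h3 : (s+1)^2 ≤ ((t+1)^2)^2 := Nat.pow_le_pow_left (by omega) 2
      have h3' : ((t+1)^2)^2 = (t+1)^4 := by ring
      have h4 := pow4_le_two_pow t ht17
      omega
    clear_value s t
    have h4st : 4*s*t < n := by
      by_contra h
      push_neg at h
      have h1 : n^4 ≤ (4*s*t)^4 := Nat.pow_le_pow_left h 4
      have h2a : t^4 ≤ s^2 := by
        calc t^4 = (t^2)^2 := by ring
          _ ≤ s^2 := Nat.pow_le_pow_left htt 2
      have h2 : (4*s*t)^4 ≤ 2048*n^3 := by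
        calc (4*s*t)^4 = 256 * s^4 * t^4 := by ring
          _ ≤ 256 * s^4 * s^2 := Nat.mul_le_mul_left _ h2a
          _ = 256 * ((s^2)^3) := by ring
          _ ≤ 256 * m^3 := Nat.mul_le_mul_left _ (Nat.pow_le_pow_left hst 3)
          _ = 2048 * n^3 := by rw [hm]; ring
      have h3 : 2048*n^3 < n^4 := by
        have he : n^4 = n * n^3 := by ring
        have : 2049 * n^3 ≤ n * n^3 := Nat.mul_le_mul_right _ (by omega)
        have hn3 : 0 < n^3 := by positivity
        omega
      omega
    have hm16 : 16 ≤ m^2 := by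
      calc (16:ℕ) ≤ m := by omega
        _ = m * 1 := by ring
        _ ≤ m * m := Nat.mul_le_mul_left _ (by omega)
        _ = m^2 := by ring
    calc 16^(e+2) * (n+e+1)^(2*k)
        ≤ (m^2)^(e+2) * m^(2*k) := by
          exact Nat.mul_le_mul (Nat.pow_le_pow_left hm16 _) (Nat.pow_le_pow_left (by omega) _)
      _ = m^(2*(e+2) + 2*k) := by rw [← pow_mul, ← pow_add]
      _ ≤ m^(4*k) := Nat.pow_le_pow_right (by omega) (by omega)
      _ ≤ m^(4*s) := Nat.pow_le_pow_right (by omega) (by omega)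
      _ ≤ (2^t)^(4*s) := Nat.pow_le_pow_left (le_of_lt hm2t) _
      _ = 2^(4*s*t) := by rw [← pow_mul, Nat.mul_comm t (4*s)]
      _ < 2^n := Nat.pow_lt_pow_right (by omega) h4st
      _ ≤ k^n := Nat.pow_le_pow_left hk2 n

/-- There is `N` such that for all `n ≥ N` and `2 ≤ d` with `4d² ≤ n`:
`∏_{i=1}^{n} ((d−1)n + i) > n^n · 4^d · (n+d−1)^{d(d−1)}`. -/
theorem stmt15 : ∃ N : ℕ, ∀ n d : ℕ, N ≤ n → 2 ≤ d → 4 * d ^ 2 ≤ n →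
    n ^ n * 4 ^ d * (n + d - 1) ^ (d * (d - 1)) <
      ∏ i ∈ Finset.Icc 1 n, ((d - 1) * n + i) := by
  use 83521
  intro n d hn hd hdn
  obtain ⟨e, rfl⟩ : ∃ e, d = e + 2 := ⟨d - 2, by omega⟩
  have hd1 : e + 2 - 1 = e + 1 := rfl
  have hnd : n + (e + 2) - 1 = n + e + 1 := by omega
  rw [hd1, hnd]
  have hcore := core n e hn hdn
  -- the reflected product
  have hIcc : ∏ i ∈ Finset.Icc 1 n, ((e+1)*n + i)
      = ∏ i ∈ Finset.range n, ((e+1)*n + (1 + i)) := by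
    rw [← Finset.Ico_add_one_right_eq_Icc, Finset.prod_Ico_eq_prod_range]
    simp
  have hrefl : ∏ i ∈ Finset.range n, ((e+1)*n + (n - i))
      = ∏ i ∈ Finset.range n, ((e+1)*n + (1 + i)) := by
    rw [← Finset.prod_range_reflect (fun i => (e+1)*n + (1 + i)) n]
    apply Finset.prod_congr rfl
    intro i hi
    simp only [Finset.mem_range] at hi
    congr 1
    omega
  have hP2 : ((e+2)*(e+1) * n^2)^n ≤
      (∏ i ∈ Finset.Icc 1 n, ((e+1)*n + i)) * (∏ i ∈ Finset.Icc 1 n, ((e+1)*n + i)) := by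
    rw [hIcc]
    nth_rewrite 2 [← hrefl]
    rw [← Finset.prod_mul_distrib]
    calc ((e+2)*(e+1) * n^2)^n = ∏ _i ∈ Finset.range n, ((e+2)*(e+1) * n^2) := by
          rw [Finset.prod_const, Finset.card_range]
      _ ≤ ∏ i ∈ Finset.range n, (((e+1)*n + (1 + i)) * ((e+1)*n + (n - i))) := by
          apply Finset.prod_le_prod
          · intro i _; positivity
          · intro i hi
            simp only [Finset.mem_range] at hi
            obtain ⟨j, hj0, hij, hj1⟩ : ∃ j, n - i = j ∧ i + j = n ∧ 1 ≤ j :=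
              ⟨n - i, rfl, by omega, by omega⟩
            rw [hj0]
            have key : ((e+1)*n + (1+i)) * ((e+1)*n + j)
                = (e+1)*(e+1)*(n*n) + (e+1)*n*(i+j+1) + (1+i)*j := by ring
            have key2 : (i + j + 1) = n + 1 := by omega
            rw [key2] at key
            have aux : (e+2)*(e+1)*n^2 + (e+1)*n = (e+1)*(e+1)*(n*n) + (e+1)*n*(n+1) := by
              ring
            linarith [key, aux, Nat.zero_le ((1+i)*j), Nat.zero_le ((e+1)*n)]
  -- squares of both sides
  have hRsq : (n ^ n * 4 ^ (e+2) * (n+e+1) ^ ((e+2)*(e+1)))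
        * (n ^ n * 4 ^ (e+2) * (n+e+1) ^ ((e+2)*(e+1)))
      = n^(2*n) * (16^(e+2) * (n+e+1)^(2*((e+2)*(e+1)))) := by
    have h4 : (16:ℕ)^(e+2) = 4^(e+2) * 4^(e+2) := by
      rw [← pow_add, show (16:ℕ) = 4^2 from rfl, ← pow_mul]
      congr 1
      ring
    have hpow : (n+e+1)^(2*((e+2)*(e+1)))
        = (n+e+1)^((e+2)*(e+1)) * (n+e+1)^((e+2)*(e+1)) := by
      rw [← pow_add]; congr 1; ring
    have hnn : n^(2*n) = n^n * n^n := by rw [← pow_add]; congr 1; ring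
    rw [h4, hpow, hnn]; ring
  have hfin : n^(2*n) * (16^(e+2) * (n+e+1)^(2*((e+2)*(e+1))))
      < ((e+2)*(e+1) * n^2)^n := by
    have h1 : ((e+2)*(e+1) * n^2)^n = n^(2*n) * ((e+2)*(e+1))^n := by
      rw [mul_pow, ← pow_mul]; ring
    rw [h1]
    exact (Nat.mul_lt_mul_left (by positivity)).mpr hcore
  by_contra h
  push_neg at h
  have hsq := Nat.mul_le_mul h h
  rw [hRsq] at hsq
  have := lt_of_lt_of_le hfin hP2
  omega
end
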